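/- arXiv:1809.03836 — 7 statements merged into one kernel-verified Lean document; each statement's English description precedes it below -/
import Mathlib

section
/- Let 𝒢 be a family of 3-element subsets of M₆ = {1,2,3,4,5,6} such that |A ∪ B| = 5 for every two distinct A, B ∈ 𝒢. Then |𝒢| ≤ 4. -/
/-!
Two 3-sets with a 5-element union meet in exactly one point. Hence the members of `𝒢`
through a fixed point `x` are disjoint away from `x`, so at most `⌊5 / 2⌋ = 2` of them
contain `x`. Counting incidences gives `3 · |𝒢| ≤ 6 · 2`.
-/

open Finset

variable {α : Type*} [DecidableEq α]

theorem Finset.card_filter_mem_le_of_pairwise_card_inter_eq_one {𝒢 : Finset (Finset α)}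
    {S : Finset α} {r : ℕ} (hr : 2 ≤ r) (hsub : ∀ A ∈ 𝒢, A ⊆ S) (hcard : ∀ A ∈ 𝒢, #A = r)
    (hinter : ∀ A ∈ 𝒢, ∀ B ∈ 𝒢, A ≠ B → #(A ∩ B) = 1) {x : α} (hx : x ∈ S) :
    #{A ∈ 𝒢 | x ∈ A} ≤ (#S - 1) / (r - 1) := by
  set 𝒢x := {A ∈ 𝒢 | x ∈ A}
  have hdisj : (𝒢x : Set (Finset α)).PairwiseDisjoint (·.erase x) := by
    intro A hA B hB hAB
    simp only [𝒢x, mem_coe, mem_filter] at hA hB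
    have hAB : A ∩ B = {x} :=
      eq_singleton_iff_unique_mem.mpr ⟨mem_inter.mpr ⟨hA.2, hB.2⟩, fun y hy =>
        card_le_one.mp (hinter A hA.1 B hB.1 hAB).le y hy x (mem_inter.mpr ⟨hA.2, hB.2⟩)⟩
    rw [Function.onFun, disjoint_iff_inter_eq_empty, erase_inter, inter_erase, erase_idem, hAB,
      erase_singleton]
  rw [Nat.le_div_iff_mul_le (by omega)]
  calc #𝒢x * (r - 1) = ∑ A ∈ 𝒢x, #(A.erase x) := by
        rw [sum_congr rfl fun A hA => card_erase_of_mem (mem_filter.mp hA).2, sum_congr rfl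
          fun A hA => congrArg (· - 1) (hcard A (mem_filter.mp hA).1), sum_const, smul_eq_mul]
    _ = #(𝒢x.biUnion (·.erase x)) := (card_biUnion hdisj).symm
    _ ≤ #(S.erase x) :=
        card_le_card <| biUnion_subset.mpr fun A hA =>
          erase_subset_erase x (hsub A (mem_filter.mp hA).1)
    _ = #S - 1 := card_erase_of_mem hx

theorem Finset.mul_card_le_of_pairwise_card_inter_eq_one {𝒢 : Finset (Finset α)}
    {S : Finset α} {r : ℕ} (hr : 2 ≤ r) (hsub : ∀ A ∈ 𝒢, A ⊆ S) (hcard : ∀ A ∈ 𝒢, #A = r)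
    (hinter : ∀ A ∈ 𝒢, ∀ B ∈ 𝒢, A ≠ B → #(A ∩ B) = 1) :
    r * #𝒢 ≤ #S * ((#S - 1) / (r - 1)) :=
  calc r * #𝒢 = ∑ A ∈ 𝒢, #(S ∩ A) := by
        rw [sum_congr rfl fun A hA => by rw [inter_eq_right.mpr (hsub A hA), hcard A hA],
          sum_const, smul_eq_mul, mul_comm]
    _ ≤ #S * ((#S - 1) / (r - 1)) := sum_card_inter_le fun _ hx =>
        card_filter_mem_le_of_pairwise_card_inter_eq_one hr hsub hcard hinter hx

theorem stmt_5 (𝒢 : Finset (Finset ℕ))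
    (h𝒢 : ∀ A ∈ 𝒢, A ⊆ ({1,2,3,4,5,6} : Finset ℕ) ∧ A.card = 3)
    (hunion : ∀ A ∈ 𝒢, ∀ B ∈ 𝒢, A ≠ B → (A ∪ B).card = 5) :
    𝒢.card ≤ 4 := by
  have hinter : ∀ A ∈ 𝒢, ∀ B ∈ 𝒢, A ≠ B → #(A ∩ B) = 1 := fun A hA B hB hAB => by
    have := card_union_add_card_inter A B
    rw [hunion A hA B hB hAB, (h𝒢 A hA).2, (h𝒢 B hB).2] at this
    omega
  have := mul_card_le_of_pairwise_card_inter_eq_one (r := 3) (by norm_num) (fun A hA => (h𝒢 A hA).1)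
    (fun A hA => (h𝒢 A hA).2) hinter
  rw [show #({1,2,3,4,5,6} : Finset ℕ) = 6 from rfl] at this
  omega
end

section
/- Let M₆ = {1,2,3,4,5,6} and let ℱ = {∅, M₆} ∪ 𝒢₃ be union-closed, where 𝒢₃ is a nonempty family of 3-element subsets of M₆. Then there exist at least 3 distinct elements of M₆ each of which belongs to at least half of the sets in ℱ. -/
/-! Two distinct 3-subsets of M₆ have a union of size at least 4, which union-closedness forces to be
M₆ itself; so they are complementary, and ℱ ⊆ {∅, M₆, A, M₆ \ A} for any A ∈ 𝒢₃. Each of the three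
elements of A then lies in the two sets A and M₆, which is at least half of the at most four sets of ℱ. -/

namespace Finset

variable {α : Type*} [DecidableEq α]

theorem lt_card_union_of_card_eq_of_ne {B C : Finset α} {k : ℕ} (hB : B.card = k)
    (hC : C.card = k) (hne : B ≠ C) : k < (B ∪ C).card := by
  by_contra! hle
  have hBC : B = B ∪ C := eq_of_subset_of_card_le subset_union_left (by omega)
  have hCB : C = B ∪ C := eq_of_subset_of_card_le subset_union_right (by omega)
  exact hne (hBC.trans hCB.symm)

theorem sdiff_eq_of_union_eq_of_card_add_card_eq {B C M : Finset α} (hunion : B ∪ C = M)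
    (hcard : B.card + C.card = M.card) : M \ B = C := by
  rw [← hunion]
  exact union_sdiff_cancel_left (card_union_eq_card_add_card.mp (hunion ▸ hcard.symm))

variable {M : Finset α} {k : ℕ} {𝒢 ℱ : Finset (Finset α)}

theorem eq_or_eq_sdiff_of_unionClosed (hM : M.card = 2 * k) (h𝒢 : ∀ A ∈ 𝒢, A.card = k)
    (hℱ : ℱ = {∅, M} ∪ 𝒢) (hUC : ∀ A ∈ ℱ, ∀ B ∈ ℱ, A ∪ B ∈ ℱ)
    {B C : Finset α} (hB : B ∈ 𝒢) (hC : C ∈ 𝒢) : C = B ∨ C = M \ B := by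
  by_cases hCB : C = B
  · exact .inl hCB
  right
  have hlt := lt_card_union_of_card_eq_of_ne (h𝒢 B hB) (h𝒢 C hC) (Ne.symm hCB)
  have hmem : B ∪ C ∈ ℱ := hUC B (by simp [hℱ, hB]) C (by simp [hℱ, hC])
  simp only [hℱ, mem_union, mem_insert, mem_singleton] at hmem
  rcases hmem with (hempty | hunion) | hG
  · simp [hempty] at hlt
  · refine (sdiff_eq_of_union_eq_of_card_add_card_eq hunion ?_).symm
    rw [h𝒢 B hB, h𝒢 C hC, hM]
    ring
  · exact absurd (h𝒢 _ hG) hlt.ne'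

theorem card_le_two_mul_card_filter_mem_of_unionClosed (hM : M.card = 2 * k)
    (h𝒢 : ∀ A ∈ 𝒢, A.card = k) (hℱ : ℱ = {∅, M} ∪ 𝒢) (hUC : ∀ A ∈ ℱ, ∀ B ∈ ℱ, A ∪ B ∈ ℱ)
    {B : Finset α} (hB : B ∈ 𝒢) (hBM : B ⊆ M) {x : α} (hx : x ∈ B) :
    ℱ.card ≤ 2 * (ℱ.filter (fun A => x ∈ A)).card := by
  have hℱ_le : ℱ.card ≤ 4 := by
    have hsub : ℱ ⊆ {∅, M, B, M \ B} := by
      intro A hA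
      have hA' := hA
      simp only [hℱ, mem_union, mem_insert, mem_singleton] at hA'
      rcases hA' with (rfl | rfl) | hG
      · simp
      · simp
      · rcases eq_or_eq_sdiff_of_unionClosed hM h𝒢 hℱ hUC hB hG with rfl | rfl <;> simp
    exact (card_le_card hsub).trans card_le_four
  have hBM_ne : B ≠ M := by
    rintro rfl
    have := card_pos.mpr ⟨x, hx⟩
    have := h𝒢 _ hB
    omega
  have hpair : {B, M} ⊆ ℱ.filter (fun A => x ∈ A) := by
    intro A hA
    simp only [mem_insert, mem_singleton] at hA
    rcases hA with rfl | rfl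
    · exact mem_filter.mpr ⟨by simp [hℱ, hB], hx⟩
    · exact mem_filter.mpr ⟨by simp [hℱ], hBM hx⟩
  have := (card_pair hBM_ne).symm.le.trans (card_le_card hpair)
  omega

end Finset

theorem stmt_8 (𝒢₃ : Finset (Finset ℕ)) (h𝒢₃ : 𝒢₃.Nonempty)
    (h3 : ∀ A ∈ 𝒢₃, A ⊆ ({1,2,3,4,5,6} : Finset ℕ) ∧ A.card = 3)
    (ℱ : Finset (Finset ℕ))
    (hℱ : ℱ = ({∅, ({1,2,3,4,5,6} : Finset ℕ)} : Finset (Finset ℕ)) ∪ 𝒢₃)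
    (hUC : ∀ A ∈ ℱ, ∀ B ∈ ℱ, A ∪ B ∈ ℱ) :
    ∃ x ∈ ({1,2,3,4,5,6} : Finset ℕ), ∃ y ∈ ({1,2,3,4,5,6} : Finset ℕ),
      ∃ z ∈ ({1,2,3,4,5,6} : Finset ℕ), x ≠ y ∧ x ≠ z ∧ y ≠ z ∧
        2 * (ℱ.filter (fun A => x ∈ A)).card ≥ ℱ.card ∧
        2 * (ℱ.filter (fun A => y ∈ A)).card ≥ ℱ.card ∧
        2 * (ℱ.filter (fun A => z ∈ A)).card ≥ ℱ.card := by
  obtain ⟨A, hA⟩ := h𝒢₃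
  obtain ⟨hAM, hAcard⟩ := h3 A hA
  have hhalf : ∀ x ∈ A, ℱ.card ≤ 2 * (ℱ.filter (fun S => x ∈ S)).card :=
    fun _ hx => Finset.card_le_two_mul_card_filter_mem_of_unionClosed (k := 3) (by rfl)
      (fun B hB => (h3 B hB).2) hℱ hUC hA hAM hx
  obtain ⟨x, y, z, hxy, hxz, hyz, rfl⟩ := Finset.card_eq_three.mp hAcard
  exact ⟨x, hAM (by simp), y, hAM (by simp), z, hAM (by simp), hxy, hxz, hyz,
    hhalf x (by simp), hhalf y (by simp), hhalf z (by simp)⟩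
end

section
/- Let M₆ = {1,2,3,4,5,6} and let ℱ = {∅, M₆} ∪ 𝒢₃ ∪ 𝒢₅ be union-closed, where 𝒢₃ is a nonempty family of 3-element subsets of M₆ and 𝒢₅ is a nonempty family of 5-element subsets of M₆. Then there exist at least 3 distinct elements of M₆ each of which belongs to at least half of the sets in ℱ. -/
/-!
Fix a triple `A ∈ ℱ` and `x ∈ A`. Since the union of two triples meeting in two points would
have four elements, `C ↦ C ∪ A` maps the members avoiding `x` injectively to members containing
`x`, except that `M \ A` and `M \ {x}` collide at `M`; so `x` is abundant unless both lie in `ℱ`.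
If some triple `T ∈ ℱ` has `M \ T ∉ ℱ`, the three points of `T` are abundant. Otherwise the
triples of `ℱ` are a complementary pair `T, M \ T`, and the points `x` with `M \ {x} ∈ ℱ` are the
only candidates to fail. If there are two of them, a direct count (at most `∅, M \ T, M \ {x}`
avoid `x`, while `M, T, M \ {y}` contain it) shows every point is abundant; if not, at least
five points are abundant.
-/

open Finset

theorem Finset.le_two_mul_card_filter_of_card_filter_not_le {α : Type*} (s : Finset α)
    (p : α → Prop) [DecidablePred p] (h : #(s.filter (¬ p ·)) ≤ #(s.filter p)) :
    #s ≤ 2 * #(s.filter p) := by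
  have := card_filter_add_card_filter_not (s := s) p
  omega

theorem Finset.exists_three_of_three_le_card_filter {α : Type*} {s : Finset α} {p : α → Prop}
    [DecidablePred p] (h : 3 ≤ #(s.filter p)) :
    ∃ x ∈ s, ∃ y ∈ s, ∃ z ∈ s, x ≠ y ∧ x ≠ z ∧ y ≠ z ∧ p x ∧ p y ∧ p z := by
  obtain ⟨x, y, z, hx, hy, hz, hxy, hxz, hyz⟩ := two_lt_card_iff.1 h
  rw [mem_filter] at hx hy hz
  exact ⟨x, hx.1, y, hy.1, z, hz.1, hxy, hxz, hyz, hx.2, hy.2, hz.2⟩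

variable {α : Type*} [DecidableEq α]

theorem Finset.eq_sdiff_of_subset_of_disjoint {D B M : Finset α} (hD : D ⊆ M) (hB : B ⊆ M)
    (hDB : Disjoint D B) (hcard : #M ≤ #D + #B) : D = M \ B :=
  eq_of_subset_of_card_le (subset_sdiff.2 ⟨hD, hDB⟩) (by rw [card_sdiff_of_subset hB]; omega)

abbrev Abundant (ℱ : Finset (Finset α)) (x : α) : Prop := #ℱ ≤ 2 * #(ℱ.filter (x ∈ ·))

theorem abundant_of_injOn_union {ℱ : Finset (Finset α)} {A : Finset α} {x : α}
    (hU : ∀ C ∈ ℱ, C ∪ A ∈ ℱ) (hx : x ∈ A) (hinj : Set.InjOn (· ∪ A) ↑(ℱ.filter (x ∉ ·))) :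
    Abundant ℱ x := by
  refine ℱ.le_two_mul_card_filter_of_card_filter_not_le _ (card_le_card_of_injOn _ ?_ hinj)
  intro C hC
  simp only [coe_filter, Set.mem_ofPred_eq] at hC ⊢
  exact ⟨hU C hC.1, mem_union_right C hx⟩

structure UnionClosed0356 (M : Finset α) (ℱ : Finset (Finset α)) : Prop where
  card_ground : #M = 6
  subset_ground : ∀ C ∈ ℱ, C ⊆ M
  card_mem : ∀ C ∈ ℱ, #C = 0 ∨ #C = 3 ∨ #C = 5 ∨ #C = 6
  union_mem : ∀ A ∈ ℱ, ∀ B ∈ ℱ, A ∪ B ∈ ℱ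

namespace UnionClosed0356

variable {M : Finset α} {ℱ : Finset (Finset α)} {A : Finset α} {x : α}

theorem eq_of_two_le_card_inter (h : UnionClosed0356 M ℱ) {B C : Finset α} (hB : B ∈ ℱ)
    (hC : C ∈ ℱ) (hB3 : #B = 3) (hC3 : #C = 3) (hBC : 2 ≤ #(B ∩ C)) : B = C := by
  have hU := h.card_mem _ (h.union_mem B hB C hC)
  have := card_union_add_card_inter B C
  have := card_le_card (subset_union_left (s₁ := B) (s₂ := C))
  have hinter : #(B ∩ C) = 3 := by omega
  exact (eq_of_subset_of_card_le inter_subset_left (by omega)).symm.trans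
    (eq_of_subset_of_card_le inter_subset_right (by omega))

theorem eq_or_eq_sdiff_of_card_three (h : UnionClosed0356 M ℱ) {T C : Finset α} (hT : T ∈ ℱ)
    (hT3 : #T = 3) (hTc : M \ T ∈ ℱ) (hC : C ∈ ℱ) (hC3 : #C = 3) : C = T ∨ C = M \ T := by
  have hTc3 : #(M \ T) = 3 := by
    rw [card_sdiff_of_subset (h.subset_ground T hT), h.card_ground, hT3]
  have hsplit : #(C ∩ T) + #(C ∩ (M \ T)) = 3 := by
    rw [← inter_sdiff_assoc, inter_eq_left.2 (h.subset_ground C hC), card_inter_add_card_sdiff, hC3]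
  by_cases hCT : 2 ≤ #(C ∩ T)
  · exact Or.inl (h.eq_of_two_le_card_inter hC hT hC3 hT3 hCT)
  · exact Or.inr (h.eq_of_two_le_card_inter hC hTc hC3 hTc3 (by omega))

theorem union_cases (h : UnionClosed0356 M ℱ) {D : Finset α} (hA : A ∈ ℱ) (hA3 : #A = 3)
    (hx : x ∈ A) (hD : D ∈ ℱ) (hxD : x ∉ D) :
    (D = ∅ ∧ #(D ∪ A) = 3) ∨ (#D = 3 ∧ #(D ∪ A) = 5) ∨
      (D = M \ A ∧ #(D ∪ A) = 6) ∨ (D = M \ {x} ∧ #(D ∪ A) = 6) := by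
  have hW := h.card_mem _ (h.union_mem D hD A hA)
  have hDc := h.card_mem D hD
  have hAW : #A ≤ #(D ∪ A) := card_le_card subset_union_right
  have hDW : #D < #(D ∪ A) :=
    card_lt_card ((ssubset_iff_of_subset subset_union_left).2 ⟨x, mem_union_right D hx, hxD⟩)
  have hWD : #(D ∪ A) ≤ #D + #A := card_union_le D A
  have hAM := h.subset_ground A hA
  have hM := h.card_ground
  rcases hW with hW | hW | hW | hW
  · omega
  · exact Or.inl ⟨card_eq_zero.1 (by omega), hW⟩
  · exact Or.inr (Or.inl ⟨by omega, hW⟩)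
  · refine Or.inr (Or.inr ?_)
    rcases (by omega : #D = 3 ∨ #D = 5) with hD3 | hD5
    · exact Or.inl ⟨eq_sdiff_of_subset_of_disjoint (h.subset_ground D hD) hAM
        (card_union_eq_card_add_card.1 (by omega)) (by omega), hW⟩
    · exact Or.inr ⟨eq_sdiff_of_subset_of_disjoint (h.subset_ground D hD)
        (singleton_subset_iff.2 (hAM hx)) (disjoint_singleton_right.2 hxD)
        (by rw [card_singleton]; omega), hW⟩

theorem eq_of_union_eq_of_card_three (h : UnionClosed0356 M ℱ) {C C' : Finset α} (hC : C ∈ ℱ)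
    (hC' : C' ∈ ℱ) (hC3 : #C = 3) (hC'3 : #C' = 3) (hCC' : C ∪ A = C' ∪ A)
    (hW : #A + 2 ≤ #(C ∪ A)) : C = C' := by
  have hsdiff : C \ A = C' \ A := by rw [← union_sdiff_right, hCC', union_sdiff_right]
  have := card_sdiff_add_card C A
  have hsub : C \ A ⊆ C ∩ C' := subset_inter sdiff_subset (hsdiff ▸ sdiff_subset)
  exact h.eq_of_two_le_card_inter hC hC' hC3 hC'3 (le_trans (by omega) (card_le_card hsub))

theorem injOn_union (h : UnionClosed0356 M ℱ) (hA : A ∈ ℱ) (hA3 : #A = 3) (hx : x ∈ A)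
    (hbad : M \ A ∉ ℱ ∨ M \ {x} ∉ ℱ) : Set.InjOn (· ∪ A) ↑(ℱ.filter (x ∉ ·)) := by
  intro C hC D hD (hCD : C ∪ A = D ∪ A)
  obtain ⟨hC, hxC⟩ := mem_filter.1 hC
  obtain ⟨hD, hxD⟩ := mem_filter.1 hD
  rcases h.union_cases hA hA3 hx hC hxC with ⟨rfl, hW⟩ | ⟨hC3, hW⟩ | ⟨rfl, hW⟩ | ⟨rfl, hW⟩ <;>
  rcases h.union_cases hA hA3 hx hD hxD with ⟨rfl, hV⟩ | ⟨hD3, hV⟩ | ⟨rfl, hV⟩ | ⟨rfl, hV⟩ <;>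
  first
  | rfl
  | (rw [hCD] at hW; omega)
  | exact h.eq_of_union_eq_of_card_three hC hD hC3 hD3 hCD (by omega)
  | (rcases hbad with hbad | hbad <;> contradiction)

theorem abundant_of_sdiff_mem (h : UnionClosed0356 M ℱ) (hM : M ∈ ℱ) {T : Finset α} (hT : T ∈ ℱ)
    (hT3 : #T = 3) (hTc : M \ T ∈ ℱ) (hx : x ∈ T) {y : α} (hy : y ∈ M) (hyx : y ≠ x)
    (hMy : M \ {y} ∈ ℱ) : Abundant ℱ x := by
  have hxM := h.subset_ground T hT hx
  have hM6 := h.card_ground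
  have hMy5 : #(M \ {y}) = 5 := by
    rw [card_sdiff_of_subset (singleton_subset_iff.2 hy), hM6, card_singleton]
  have hout : ℱ.filter (x ∉ ·) ⊆ {∅, M \ T, M \ {x}} := by
    intro C hC
    obtain ⟨hC, hxC⟩ := mem_filter.1 hC
    have hCM := h.subset_ground C hC
    simp only [mem_insert, mem_singleton]
    rcases h.card_mem C hC with hC0 | hC3 | hC5 | hC6
    · exact Or.inl (card_eq_zero.1 hC0)
    · refine Or.inr (Or.inl ((h.eq_or_eq_sdiff_of_card_three hT hT3 hTc hC hC3).resolve_left ?_))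
      rintro rfl
      exact hxC hx
    · exact Or.inr (Or.inr (eq_sdiff_of_subset_of_disjoint hCM (singleton_subset_iff.2 hxM)
        (disjoint_singleton_right.2 hxC) (by rw [card_singleton]; omega)))
    · exact absurd (eq_of_subset_of_card_le hCM (by omega) ▸ hxM) hxC
  have hin : {M, T, M \ {y}} ⊆ ℱ.filter (x ∈ ·) := by
    simp only [insert_subset_iff, singleton_subset_iff, mem_filter]
    exact ⟨⟨hM, hxM⟩, ⟨hT, hx⟩, hMy, by simp [hxM, hyx.symm]⟩
  have hthree : #({M, T, M \ {y}} : Finset (Finset α)) = 3 :=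
    card_eq_three.2 ⟨M, T, M \ {y}, ne_of_apply_ne card (by omega),
      ne_of_apply_ne card (by omega), ne_of_apply_ne card (by omega), rfl⟩
  refine ℱ.le_two_mul_card_filter_of_card_filter_not_le _ ?_
  calc #(ℱ.filter (x ∉ ·)) ≤ #({∅, M \ T, M \ {x}} : Finset (Finset α)) := card_le_card hout
    _ ≤ 3 := card_le_three
    _ = #{M, T, M \ {y}} := hthree.symm
    _ ≤ _ := card_le_card hin

theorem exists_triple_of_forall_sdiff_mem (h : UnionClosed0356 M ℱ) (hA : A ∈ ℱ) (hA3 : #A = 3)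
    (hcompl : ∀ T ∈ ℱ, #T = 3 → M \ T ∈ ℱ) (hx : x ∈ M) :
    ∃ T ∈ ℱ, #T = 3 ∧ M \ T ∈ ℱ ∧ x ∈ T := by
  by_cases hxA : x ∈ A
  · exact ⟨A, hA, hA3, hcompl A hA hA3, hxA⟩
  · have hAM := h.subset_ground A hA
    have hAc3 : #(M \ A) = 3 := by rw [card_sdiff_of_subset hAM, h.card_ground, hA3]
    exact ⟨M \ A, hcompl A hA hA3, hAc3, by rwa [Finset.sdiff_sdiff_eq_self hAM],
      mem_sdiff.2 ⟨hx, hxA⟩⟩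

theorem three_le_card_filter_abundant_of_forall_sdiff_mem (h : UnionClosed0356 M ℱ)
    (hM : M ∈ ℱ) (hA : A ∈ ℱ) (hA3 : #A = 3) (hcompl : ∀ T ∈ ℱ, #T = 3 → M \ T ∈ ℱ) :
    3 ≤ #(M.filter (Abundant ℱ)) := by
  set S := M.filter (M \ {·} ∈ ℱ)
  have habundant : ∀ x ∈ M, x ∉ S ∨ 1 < #S → Abundant ℱ x := by
    intro x hx hS
    obtain ⟨T, hT, hT3, hTc, hxT⟩ := h.exists_triple_of_forall_sdiff_mem hA hA3 hcompl hx
    by_cases hxS : x ∈ S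
    · obtain ⟨y, hyS, hyx⟩ := exists_mem_ne (hS.resolve_left (not_not_intro hxS)) x
      obtain ⟨hy, hMy⟩ := mem_filter.1 hyS
      exact h.abundant_of_sdiff_mem hM hT hT3 hTc hxT hy hyx hMy
    · exact abundant_of_injOn_union (fun C hC => h.union_mem C hC T hT) hxT
        (h.injOn_union hT hT3 hxT (Or.inr fun hMx => hxS (mem_filter.2 ⟨hx, hMx⟩)))
  have hM6 := h.card_ground
  by_cases hS : 1 < #S
  · rw [filter_true_of_mem fun x hx => habundant x hx (Or.inr hS), hM6]
    omega
  · have : #S + #(M.filter (M \ {·} ∉ ℱ)) = #M := card_filter_add_card_filter_not _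
    calc 3 ≤ #(M.filter (M \ {·} ∉ ℱ)) := by omega
      _ ≤ _ := card_le_card fun x hx => by
        obtain ⟨hxM, hxS⟩ := mem_filter.1 hx
        exact mem_filter.2 ⟨hxM, habundant x hxM (Or.inl fun h' => hxS (mem_filter.1 h').2)⟩

theorem three_le_card_filter_abundant (h : UnionClosed0356 M ℱ) (hM : M ∈ ℱ) (hA : A ∈ ℱ)
    (hA3 : #A = 3) : 3 ≤ #(M.filter (Abundant ℱ)) := by
  by_cases hcompl : ∀ T ∈ ℱ, #T = 3 → M \ T ∈ ℱ
  · exact h.three_le_card_filter_abundant_of_forall_sdiff_mem hM hA hA3 hcompl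
  push Not at hcompl
  obtain ⟨T, hT, hT3, hTc⟩ := hcompl
  calc 3 = #T := hT3.symm
    _ ≤ _ := card_le_card fun x hx => mem_filter.2 ⟨h.subset_ground T hT hx,
      abundant_of_injOn_union (fun C hC => h.union_mem C hC T hT) hx
        (h.injOn_union hT hT3 hx (Or.inl hTc))⟩

theorem of_eq_union {𝒢₃ 𝒢₅ : Finset (Finset α)} (hM : #M = 6) (h3 : ∀ A ∈ 𝒢₃, A ⊆ M ∧ #A = 3)
    (h5 : ∀ A ∈ 𝒢₅, A ⊆ M ∧ #A = 5) (hℱ : ℱ = {∅, M} ∪ 𝒢₃ ∪ 𝒢₅)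
    (hU : ∀ A ∈ ℱ, ∀ B ∈ ℱ, A ∪ B ∈ ℱ) : UnionClosed0356 M ℱ := by
  have hmem : ∀ C ∈ ℱ, C ⊆ M ∧ (#C = 0 ∨ #C = 3 ∨ #C = 5 ∨ #C = 6) := by
    intro C hC
    simp only [hℱ, mem_union, mem_insert, mem_singleton] at hC
    rcases hC with ((rfl | rfl) | hC) | hC
    · simp
    · simp [hM]
    · simp [h3 C hC]
    · simp [h5 C hC]
  exact ⟨hM, fun C hC => (hmem C hC).1, fun C hC => (hmem C hC).2, hU⟩

end UnionClosed0356

theorem stmt_9_general (𝒢₃ 𝒢₅ : Finset (Finset ℕ))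
    (h𝒢₃ : 𝒢₃.Nonempty)
    (h3 : ∀ A ∈ 𝒢₃, A ⊆ ({1,2,3,4,5,6} : Finset ℕ) ∧ A.card = 3)
    (h5 : ∀ A ∈ 𝒢₅, A ⊆ ({1,2,3,4,5,6} : Finset ℕ) ∧ A.card = 5)
    (ℱ : Finset (Finset ℕ))
    (hℱ : ℱ = ({∅, ({1,2,3,4,5,6} : Finset ℕ)} : Finset (Finset ℕ)) ∪ 𝒢₃ ∪ 𝒢₅)
    (hUC : ∀ A ∈ ℱ, ∀ B ∈ ℱ, A ∪ B ∈ ℱ) :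
    ∃ x ∈ ({1,2,3,4,5,6} : Finset ℕ), ∃ y ∈ ({1,2,3,4,5,6} : Finset ℕ),
      ∃ z ∈ ({1,2,3,4,5,6} : Finset ℕ), x ≠ y ∧ x ≠ z ∧ y ≠ z ∧
        2 * (ℱ.filter (fun A => x ∈ A)).card ≥ ℱ.card ∧
        2 * (ℱ.filter (fun A => y ∈ A)).card ≥ ℱ.card ∧
        2 * (ℱ.filter (fun A => z ∈ A)).card ≥ ℱ.card := by
  have h : UnionClosed0356 {1,2,3,4,5,6} ℱ := .of_eq_union rfl h3 h5 hℱ hUC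
  obtain ⟨A, hA⟩ := h𝒢₃
  have hAℱ : A ∈ ℱ := hℱ ▸ mem_union_left _ (mem_union_right _ hA)
  have hMℱ : {1,2,3,4,5,6} ∈ ℱ := by simp [hℱ]
  exact exists_three_of_three_le_card_filter
    (h.three_le_card_filter_abundant hMℱ hAℱ (h3 A hA).2)

theorem stmt_9 (𝒢₃ 𝒢₅ : Finset (Finset ℕ))
    (h𝒢₃ : 𝒢₃.Nonempty) (h𝒢₅ : 𝒢₅.Nonempty)
    (h3 : ∀ A ∈ 𝒢₃, A ⊆ ({1,2,3,4,5,6} : Finset ℕ) ∧ A.card = 3)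
    (h5 : ∀ A ∈ 𝒢₅, A ⊆ ({1,2,3,4,5,6} : Finset ℕ) ∧ A.card = 5)
    (ℱ : Finset (Finset ℕ))
    (hℱ : ℱ = ({∅, ({1,2,3,4,5,6} : Finset ℕ)} : Finset (Finset ℕ)) ∪ 𝒢₃ ∪ 𝒢₅)
    (hUC : ∀ A ∈ ℱ, ∀ B ∈ ℱ, A ∪ B ∈ ℱ) :
    ∃ x ∈ ({1,2,3,4,5,6} : Finset ℕ), ∃ y ∈ ({1,2,3,4,5,6} : Finset ℕ),
      ∃ z ∈ ({1,2,3,4,5,6} : Finset ℕ), x ≠ y ∧ x ≠ z ∧ y ≠ z ∧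
        2 * (ℱ.filter (fun A => x ∈ A)).card ≥ ℱ.card ∧
        2 * (ℱ.filter (fun A => y ∈ A)).card ≥ ℱ.card ∧
        2 * (ℱ.filter (fun A => z ∈ A)).card ≥ ℱ.card :=
  stmt_9_general 𝒢₃ 𝒢₅ h𝒢₃ h3 h5 ℱ hℱ hUC
end

section
/- Let M₆ = {1,2,3,4,5,6} and let ℱ = {∅, M₆} ∪ 𝒢₃ ∪ 𝒢₄ be union-closed, where 𝒢₃ is a nonempty family of 3-element subsets of M₆ and 𝒢₄ is a nonempty family of 4-element subsets of M₆. Then there exist at least 3 distinct elements of M₆ each of which belongs to at least half of the sets in ℱ. -/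
/-!
Call `x` abundant in `ℱ` if it lies in at least half of the members. If two distinct 3-sets
miss `x`, their union has at least four elements and still misses `x`; so when `x` lies in every
4-element member, at most `∅` and a single 3-set miss `x`, while `M` and any 4-set contain it, and
`x` is abundant. If there is only one 4-set `B`, this makes every point of `B` abundant.

Otherwise two distinct 4-sets have union `M`, hence meet in two points. Every 4-set `B` either
contains a fixed 3-set `A` or has its complement inside `A`, and at most one 4-set is of each
kind, so there are exactly two 4-sets `B₀` and `B₁`. The two points of `B₀ ∩ B₁` are abundant by
the first argument. Every 3-set contains `M \ B₀` or `M \ B₁`; if the second kind is at least as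
frequent, the points of `M \ B₁` are abundant too, and again all of `B₀` is abundant.
-/

open Finset

variable {α : Type*} [DecidableEq α]

def IsAbundant (ℱ : Finset (Finset α)) (x : α) : Prop :=
  #ℱ ≤ 2 * #{S ∈ ℱ | x ∈ S}

lemma isAbundant_of_card_filter_notMem_le {ℱ : Finset (Finset α)} {x : α}
    (h : #{S ∈ ℱ | x ∉ S} ≤ #{S ∈ ℱ | x ∈ S}) : IsAbundant ℱ x := by
  have := card_filter_add_card_filter_not (s := ℱ) (fun S => x ∈ S)
  unfold IsAbundant
  omega

lemma card_filter_notMem_le_two {ℱ : Finset (Finset α)} (hℱ : SupClosed (ℱ : Set (Finset α)))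
    {x : α} {k : ℕ} (hk : ∀ S ∈ ℱ, x ∉ S → S = ∅ ∨ #S = k) :
    #{S ∈ ℱ | x ∉ S} ≤ 2 := by
  have hle : #({S ∈ ℱ | x ∉ S}.erase ∅) ≤ 1 := by
    refine card_le_one.2 fun S hS S' hS' => ?_
    simp only [mem_erase, mem_filter] at hS hS'
    obtain ⟨hS₀, hSℱ, hxS⟩ := hS
    obtain ⟨hS'₀, hS'ℱ, hxS'⟩ := hS'
    have hSk := (hk S hSℱ hxS).resolve_left hS₀
    have hS'k := (hk S' hS'ℱ hxS').resolve_left hS'₀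
    have hU : S ∪ S' ∈ ℱ := hℱ hSℱ hS'ℱ
    have hUk := (hk _ hU (by simp [hxS, hxS'])).resolve_left (by simp [hS₀])
    have h₁ : S = S ∪ S' := eq_of_subset_of_card_le subset_union_left (by omega)
    have h₂ : S' = S ∪ S' := eq_of_subset_of_card_le subset_union_right (by omega)
    exact h₁.trans h₂.symm
  have := pred_card_le_card_erase (s := {S ∈ ℱ | x ∉ S}) (a := ∅)
  omega

structure IsUnionClosed0346 (M : Finset α) (ℱ : Finset (Finset α)) : Prop where
  supClosed : SupClosed (ℱ : Set (Finset α))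
  subset : ∀ S ∈ ℱ, S ⊆ M
  card_cases : ∀ S ∈ ℱ, #S = 0 ∨ #S = 3 ∨ #S = 4 ∨ #S = 6
  top_mem : M ∈ ℱ
  card_eq : #M = 6

namespace IsUnionClosed0346

variable {M : Finset α} {ℱ : Finset (Finset α)} {A B B' B₀ B₁ S : Finset α} {x : α}

lemma union_mem (h : IsUnionClosed0346 M ℱ) (hA : A ∈ ℱ) (hB : B ∈ ℱ) : A ∪ B ∈ ℱ :=
  h.supClosed hA hB

lemma top_ne (h : IsUnionClosed0346 M ℱ) (hB4 : #B = 4) : M ≠ B := by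
  rintro rfl
  have := h.card_eq
  omega

lemma eq_top_of_five_le_card (h : IsUnionClosed0346 M ℱ) (hS : S ∈ ℱ) (h5 : 5 ≤ #S) : S = M := by
  refine eq_of_subset_of_card_le (h.subset S hS) ?_
  have := h.card_eq
  rcases h.card_cases S hS with _ | _ | _ | _ <;> omega

lemma subset_or_sdiff_subset (h : IsUnionClosed0346 M ℱ) (hA : A ∈ ℱ)
    (hB : B ∈ ℱ) (hB4 : #B = 4) : A ⊆ B ∨ M \ B ⊆ A := by
  rcases (card_le_card (subset_union_right : B ⊆ A ∪ B)).eq_or_lt with heq | hlt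
  · exact Or.inl <| union_eq_right.1 (eq_of_subset_of_card_le subset_union_right heq.ge).symm
  · have hU : A ∪ B = M := h.eq_top_of_five_le_card (h.union_mem hA hB) (by omega)
    exact Or.inr <| sdiff_le_iff'.2 hU.ge

lemma union_eq_top (h : IsUnionClosed0346 M ℱ) (hB : B ∈ ℱ) (hB4 : #B = 4)
    (hB' : B' ∈ ℱ) (hB'4 : #B' = 4) (hne : B ≠ B') : B ∪ B' = M := by
  refine h.eq_top_of_five_le_card (h.union_mem hB hB') ?_
  by_contra! hlt
  have h₁ : B = B ∪ B' := eq_of_subset_of_card_le subset_union_left (by omega)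
  have h₂ : B' = B ∪ B' := eq_of_subset_of_card_le subset_union_right (by omega)
  exact hne (h₁.trans h₂.symm)

lemma card_inter_eq_two (h : IsUnionClosed0346 M ℱ) (hB : B ∈ ℱ) (hB4 : #B = 4)
    (hB' : B' ∈ ℱ) (hB'4 : #B' = 4) (hne : B ≠ B') : #(B ∩ B') = 2 := by
  have := card_union_add_card_inter B B'
  rw [h.union_eq_top hB hB4 hB' hB'4 hne, h.card_eq] at this
  omega

lemma eq_of_subset_of_subset (h : IsUnionClosed0346 M ℱ) (hA3 : #A = 3)
    (hB : B ∈ ℱ) (hB4 : #B = 4) (hB' : B' ∈ ℱ) (hB'4 : #B' = 4)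
    (hAB : A ⊆ B) (hAB' : A ⊆ B') : B = B' := by
  by_contra hne
  have := card_le_card (subset_inter hAB hAB')
  rw [h.card_inter_eq_two hB hB4 hB' hB'4 hne] at this
  omega

lemma eq_of_sdiff_subset_of_sdiff_subset (h : IsUnionClosed0346 M ℱ) (hA3 : #A = 3)
    (hB : B ∈ ℱ) (hB4 : #B = 4) (hB' : B' ∈ ℱ) (hB'4 : #B' = 4)
    (hBA : M \ B ⊆ A) (hB'A : M \ B' ⊆ A) : B = B' := by
  by_contra hne
  have := card_le_card (union_subset hBA hB'A)
  rw [← sdiff_inter_distrib_right, card_sdiff_of_subset (inter_subset_left.trans (h.subset B hB)),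
    h.card_eq, h.card_inter_eq_two hB hB4 hB' hB'4 hne] at this
  omega

lemma eq_or_eq_of_card_four (h : IsUnionClosed0346 M ℱ) (hA : A ∈ ℱ) (hA3 : #A = 3)
    (hB₀ : B₀ ∈ ℱ) (hB₀4 : #B₀ = 4) (hB₁ : B₁ ∈ ℱ) (hB₁4 : #B₁ = 4) (hne : B₀ ≠ B₁)
    (hB : B ∈ ℱ) (hB4 : #B = 4) : B = B₀ ∨ B = B₁ := by
  by_contra! hB'
  obtain ⟨hB₀', hB₁'⟩ := hB'
  rcases h.subset_or_sdiff_subset hA hB hB4 with h' | h' <;>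
  rcases h.subset_or_sdiff_subset hA hB₀ hB₀4 with h₀ | h₀ <;>
  rcases h.subset_or_sdiff_subset hA hB₁ hB₁4 with h₁ | h₁ <;>
  first
  | exact hB₀' (h.eq_of_subset_of_subset hA3 hB hB4 hB₀ hB₀4 h' h₀)
  | exact hB₁' (h.eq_of_subset_of_subset hA3 hB hB4 hB₁ hB₁4 h' h₁)
  | exact hne (h.eq_of_subset_of_subset hA3 hB₀ hB₀4 hB₁ hB₁4 h₀ h₁)
  | exact hB₀' (h.eq_of_sdiff_subset_of_sdiff_subset hA3 hB hB4 hB₀ hB₀4 h' h₀)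
  | exact hB₁' (h.eq_of_sdiff_subset_of_sdiff_subset hA3 hB hB4 hB₁ hB₁4 h' h₁)
  | exact hne (h.eq_of_sdiff_subset_of_sdiff_subset hA3 hB₀ hB₀4 hB₁ hB₁4 h₀ h₁)

lemma isAbundant_of_forall_card_four_mem (h : IsUnionClosed0346 M ℱ) (hB : B ∈ ℱ)
    (hB4 : #B = 4) (hx : ∀ B' ∈ ℱ, #B' = 4 → x ∈ B') : IsAbundant ℱ x := by
  have hxM : x ∈ M := h.subset B hB (hx B hB hB4)
  have hmissing : #{S ∈ ℱ | x ∉ S} ≤ 2 := by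
    refine card_filter_notMem_le_two h.supClosed (k := 3) fun S hS hxS => ?_
    rcases h.card_cases S hS with h0 | h3 | h4 | h6
    · exact Or.inl (card_eq_zero.1 h0)
    · exact Or.inr h3
    · exact absurd (hx S hS h4) hxS
    · exact absurd (h.eq_top_of_five_le_card hS (by omega) ▸ hxM) hxS
  have hcontaining : {M, B} ⊆ {S ∈ ℱ | x ∈ S} := by
    simp [insert_subset_iff, h.top_mem, hxM, hB, hx B hB hB4]
  refine isAbundant_of_card_filter_notMem_le ?_
  calc #{S ∈ ℱ | x ∉ S} ≤ 2 := hmissing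
    _ = #{M, B} := (card_pair (h.top_ne hB4)).symm
    _ ≤ #{S ∈ ℱ | x ∈ S} := card_le_card hcontaining

lemma sdiff_subset_of_subset (h : IsUnionClosed0346 M ℱ) (hA : A ∈ ℱ) (hA3 : #A = 3)
    (hB₀ : B₀ ∈ ℱ) (hB₀4 : #B₀ = 4) (hB₁ : B₁ ∈ ℱ) (hB₁4 : #B₁ = 4) (hne : B₀ ≠ B₁)
    (hAB₁ : A ⊆ B₁) : M \ B₀ ⊆ A :=
  (h.subset_or_sdiff_subset hA hB₀ hB₀4).resolve_left fun hAB₀ =>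
    hne (h.eq_of_subset_of_subset hA3 hB₀ hB₀4 hB₁ hB₁4 hAB₀ hAB₁)

lemma filter_notMem_subset (h : IsUnionClosed0346 M ℱ)
    (hB₀ : B₀ ∈ ℱ) (hB₀4 : #B₀ = 4) (hB₁ : B₁ ∈ ℱ) (hB₁4 : #B₁ = 4) (hne : B₀ ≠ B₁)
    (hfour : ∀ B ∈ ℱ, #B = 4 → B = B₀ ∨ B = B₁) (hx₀ : x ∈ B₀) (hx₁ : x ∉ B₁) :
    {S ∈ ℱ | x ∉ S} ⊆ {∅, B₁} ∪ {A ∈ ℱ | #A = 3 ∧ M \ B₀ ⊆ A} := by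
  have hxM : x ∈ M := h.subset B₀ hB₀ hx₀
  intro S hS
  obtain ⟨hSℱ, hxS⟩ := mem_filter.1 hS
  simp only [mem_union, mem_insert, mem_singleton, mem_filter]
  rcases h.card_cases S hSℱ with h0 | h3 | h4 | h6
  · exact Or.inl (Or.inl (card_eq_zero.1 h0))
  · have hSB₁ : S ⊆ B₁ := (h.subset_or_sdiff_subset hSℱ hB₁ hB₁4).resolve_right
      fun hsub => hxS (hsub (mem_sdiff.2 ⟨hxM, hx₁⟩))
    exact Or.inr ⟨hSℱ, h3, h.sdiff_subset_of_subset hSℱ h3 hB₀ hB₀4 hB₁ hB₁4 hne hSB₁⟩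
  · rcases hfour S hSℱ h4 with rfl | rfl
    · exact absurd hx₀ hxS
    · exact Or.inl (Or.inr rfl)
  · exact absurd (h.eq_top_of_five_le_card hSℱ (by omega) ▸ hxM) hxS

lemma isAbundant_of_mem_of_notMem (h : IsUnionClosed0346 M ℱ)
    (hB₀ : B₀ ∈ ℱ) (hB₀4 : #B₀ = 4) (hB₁ : B₁ ∈ ℱ) (hB₁4 : #B₁ = 4) (hne : B₀ ≠ B₁)
    (hfour : ∀ B ∈ ℱ, #B = 4 → B = B₀ ∨ B = B₁)
    (hc : #{A ∈ ℱ | #A = 3 ∧ M \ B₀ ⊆ A} ≤ #{A ∈ ℱ | #A = 3 ∧ M \ B₁ ⊆ A})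
    (hx₀ : x ∈ B₀) (hx₁ : x ∉ B₁) : IsAbundant ℱ x := by
  have hxM : x ∈ M := h.subset B₀ hB₀ hx₀
  have hcontaining : {M, B₀} ∪ {A ∈ ℱ | #A = 3 ∧ M \ B₁ ⊆ A} ⊆ {S ∈ ℱ | x ∈ S} := by
    refine union_subset ?_ fun A hA => ?_
    · simp [insert_subset_iff, h.top_mem, hxM, hB₀, hx₀]
    · obtain ⟨hAℱ, -, hsub⟩ := mem_filter.1 hA
      exact mem_filter.2 ⟨hAℱ, hsub (mem_sdiff.2 ⟨hxM, hx₁⟩)⟩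
  have hdisj : Disjoint {M, B₀} {A ∈ ℱ | #A = 3 ∧ M \ B₁ ⊆ A} := by
    have := h.card_eq
    simp only [disjoint_left, mem_insert, mem_singleton, mem_filter]
    rintro S (rfl | rfl) ⟨-, h3, -⟩ <;> omega
  refine isAbundant_of_card_filter_notMem_le ?_
  calc #{S ∈ ℱ | x ∉ S}
      ≤ #({∅, B₁} ∪ {A ∈ ℱ | #A = 3 ∧ M \ B₀ ⊆ A}) :=
        card_le_card (h.filter_notMem_subset hB₀ hB₀4 hB₁ hB₁4 hne hfour hx₀ hx₁)
    _ ≤ 2 + #{A ∈ ℱ | #A = 3 ∧ M \ B₁ ⊆ A} := by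
        have := card_le_two (a := ∅) (b := B₁)
        have := card_union_le {∅, B₁} {A ∈ ℱ | #A = 3 ∧ M \ B₀ ⊆ A}
        omega
    _ = #({M, B₀} ∪ {A ∈ ℱ | #A = 3 ∧ M \ B₁ ⊆ A}) := by
        rw [card_union_of_disjoint hdisj, card_pair (h.top_ne hB₀4)]
    _ ≤ #{S ∈ ℱ | x ∈ S} := card_le_card hcontaining

lemma forall_mem_isAbundant (h : IsUnionClosed0346 M ℱ)
    (hB₀ : B₀ ∈ ℱ) (hB₀4 : #B₀ = 4) (hB₁ : B₁ ∈ ℱ) (hB₁4 : #B₁ = 4) (hne : B₀ ≠ B₁)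
    (hfour : ∀ B ∈ ℱ, #B = 4 → B = B₀ ∨ B = B₁)
    (hc : #{A ∈ ℱ | #A = 3 ∧ M \ B₀ ⊆ A} ≤ #{A ∈ ℱ | #A = 3 ∧ M \ B₁ ⊆ A}) :
    ∀ x ∈ B₀, IsAbundant ℱ x := by
  intro x hx₀
  by_cases hx₁ : x ∈ B₁
  · refine h.isAbundant_of_forall_card_four_mem hB₀ hB₀4 fun B hB hB4 => ?_
    rcases hfour B hB hB4 with rfl | rfl <;> assumption
  · exact h.isAbundant_of_mem_of_notMem hB₀ hB₀4 hB₁ hB₁4 hne hfour hc hx₀ hx₁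

theorem exists_card_four_forall_isAbundant (h : IsUnionClosed0346 M ℱ)
    (hA : A ∈ ℱ) (hA3 : #A = 3) (hB : B ∈ ℱ) (hB4 : #B = 4) :
    ∃ B ∈ ℱ, #B = 4 ∧ ∀ x ∈ B, IsAbundant ℱ x := by
  by_cases hone : ∀ B' ∈ ℱ, #B' = 4 → B' = B
  · refine ⟨B, hB, hB4, fun x hx => h.isAbundant_of_forall_card_four_mem hB hB4 ?_⟩
    exact fun B' hB' hB'4 => hone B' hB' hB'4 ▸ hx
  push Not at hone
  obtain ⟨B', hB', hB'4, hne⟩ := hone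
  have hfour (C : Finset α) (hC : C ∈ ℱ) (hC4 : #C = 4) : C = B ∨ C = B' :=
    h.eq_or_eq_of_card_four hA hA3 hB hB4 hB' hB'4 hne.symm hC hC4
  rcases le_total #{A ∈ ℱ | #A = 3 ∧ M \ B ⊆ A} #{A ∈ ℱ | #A = 3 ∧ M \ B' ⊆ A} with hc | hc
  · exact ⟨B, hB, hB4, h.forall_mem_isAbundant hB hB4 hB' hB'4 hne.symm hfour hc⟩
  · refine ⟨B', hB', hB'4, h.forall_mem_isAbundant hB' hB'4 hB hB4 hne ?_ hc⟩
    exact fun C hC hC4 => (hfour C hC hC4).symm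

end IsUnionClosed0346

theorem stmt_10 (𝒢₃ 𝒢₄ : Finset (Finset ℕ))
    (h𝒢₃ : 𝒢₃.Nonempty) (h𝒢₄ : 𝒢₄.Nonempty)
    (h3 : ∀ A ∈ 𝒢₃, A ⊆ ({1,2,3,4,5,6} : Finset ℕ) ∧ A.card = 3)
    (h4 : ∀ A ∈ 𝒢₄, A ⊆ ({1,2,3,4,5,6} : Finset ℕ) ∧ A.card = 4)
    (ℱ : Finset (Finset ℕ))
    (hℱ : ℱ = ({∅, ({1,2,3,4,5,6} : Finset ℕ)} : Finset (Finset ℕ)) ∪ 𝒢₃ ∪ 𝒢₄)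
    (hUC : ∀ A ∈ ℱ, ∀ B ∈ ℱ, A ∪ B ∈ ℱ) :
    ∃ x ∈ ({1,2,3,4,5,6} : Finset ℕ), ∃ y ∈ ({1,2,3,4,5,6} : Finset ℕ),
      ∃ z ∈ ({1,2,3,4,5,6} : Finset ℕ), x ≠ y ∧ x ≠ z ∧ y ≠ z ∧
        2 * (ℱ.filter (fun A => x ∈ A)).card ≥ ℱ.card ∧
        2 * (ℱ.filter (fun A => y ∈ A)).card ≥ ℱ.card ∧
        2 * (ℱ.filter (fun A => z ∈ A)).card ≥ ℱ.card := by
  set M : Finset ℕ := {1,2,3,4,5,6}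
  have hmem (S : Finset ℕ) (hS : S ∈ ℱ) :
      S ⊆ M ∧ (#S = 0 ∨ #S = 3 ∨ #S = 4 ∨ #S = 6) := by
    simp only [hℱ, mem_union, mem_insert, mem_singleton] at hS
    rcases hS with ((rfl | rfl) | hS) | hS
    · simp
    · exact ⟨subset_rfl, by decide⟩
    · exact ⟨(h3 S hS).1, by simp [(h3 S hS).2]⟩
    · exact ⟨(h4 S hS).1, by simp [(h4 S hS).2]⟩
  have h : IsUnionClosed0346 M ℱ :=
    { supClosed := fun S hS S' hS' => hUC S hS S' hS'
      subset := fun S hS => (hmem S hS).1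
      card_cases := fun S hS => (hmem S hS).2
      top_mem := by simp [hℱ]
      card_eq := by decide }
  obtain ⟨A, hA⟩ := h𝒢₃
  obtain ⟨B, hB⟩ := h𝒢₄
  obtain ⟨C, hC, hC4, habundant⟩ := h.exists_card_four_forall_isAbundant
    (by simp [hℱ, hA]) (h3 A hA).2 (by simp [hℱ, hB]) (h4 B hB).2
  obtain ⟨x, hx, y, hy, z, hz, hxy, hxz, hyz⟩ := two_lt_card.1 (by omega : 2 < #C)
  exact ⟨x, h.subset C hC hx, y, h.subset C hC hy, z, h.subset C hC hz, hxy, hxz, hyz,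
    habundant x hx, habundant y hy, habundant z hz⟩
end

section
/- Let M₆ = {1,2,3,4,5,6} and let ℱ = {∅, M₆} ∪ 𝒢₃ ∪ 𝒢₄ ∪ 𝒢₅ be union-closed, where 𝒢ᵢ is a nonempty family of i-element subsets of M₆ for i = 3, 4, 5. Then there exist at least 3 distinct elements of M₆ each of which belongs to at least half of the sets in ℱ. -/
/-!
Call a point heavy if it lies in at least half of the members of `ℱ`, and suppose the heavy points
form a set `H` with `|H| ≤ 2`. Summing `2·deg x < |ℱ|` over the light points `M₆ \ H`, and using
that a member `A` has at least `|A| - |H|` light points, one more unless `H ⊆ A`, shows that many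
triples of `ℱ` contain `H`: this is absurd for `H = ∅`, and gives at least `3|𝒢₅| + 5` triples
through `a` if `H = {a}`, and at least `|𝒢₅| + 2` through `H` if `|H| = 2`.

On the other hand, if `t` triples `P ∪ {u}` of `ℱ` contain a pair `P`, union-closure puts the
`C(t, 3)` sets `P ∪ {u, v, w}` into `𝒢₅`. For `H = {a}`, pigeonhole over the pairs `{a, u}` finds
a pair in four triples, so `|𝒢₅| ≥ 4` and there are more triples through `a` than exist. For
`|H| = 2` the only survivor has exactly three triples `H ∪ {u}`, `u ∈ U`, and `𝒢₅ = {H ∪ U}`; then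
the sixth point lies in no proper member of `ℱ`, and the same count over the three points of `U`
fails.
-/

open Finset

section

variable {α : Type*} [DecidableEq α]

theorem sum_card_filter_mem_eq_sum_card_inter (𝒜 : Finset (Finset α)) (X : Finset α) :
    ∑ x ∈ X, #{A ∈ 𝒜 | x ∈ A} = ∑ A ∈ 𝒜, #(X ∩ A) := by
  simp_rw [← filter_mem_eq_inter, card_eq_sum_ones, sum_filter]
  exact sum_comm

theorem two_mul_sum_card_inter_add_card_le {𝒜 : Finset (Finset α)} {X : Finset α}
    (hX : ∀ x ∈ X, 2 * #{A ∈ 𝒜 | x ∈ A} < #𝒜) :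
    2 * ∑ A ∈ 𝒜, #(X ∩ A) + #X ≤ #X * #𝒜 :=
  calc 2 * ∑ A ∈ 𝒜, #(X ∩ A) + #X = ∑ x ∈ X, (2 * #{A ∈ 𝒜 | x ∈ A} + 1) := by
        rw [sum_add_distrib, ← mul_sum, sum_card_filter_mem_eq_sum_card_inter, card_eq_sum_ones]
    _ ≤ ∑ _x ∈ X, #𝒜 := sum_le_sum hX
    _ = #X * #𝒜 := by rw [sum_const, smul_eq_mul]

theorem card_add_one_le_card_inter_add_card {A X P : Finset α} (hA : A ⊆ X ∪ P) :
    #A + 1 ≤ #(X ∩ A) + #P + if P ⊆ A then 1 else 0 := by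
  have hsplit : #A ≤ #(X ∩ A) + #(P ∩ A) := by
    calc #A = #(X ∩ A ∪ P ∩ A) := by rw [← union_inter_distrib_right, inter_eq_right.2 hA]
      _ ≤ #(X ∩ A) + #(P ∩ A) := card_union_le _ _
  split_ifs with hPA
  · rw [inter_eq_left.2 hPA] at hsplit
    omega
  · have : #(P ∩ A) < #P := card_lt_card <|
      inter_subset_left.ssubset_of_not_subset fun h => hPA (h.trans inter_subset_right)
    omega

theorem add_one_mul_card_le_sum_card_inter {𝒜 : Finset (Finset α)} {X P : Finset α} {k : ℕ}
    (hk : ∀ A ∈ 𝒜, #A = k) (hcover : ∀ A ∈ 𝒜, A ⊆ X ∪ P) :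
    (k + 1) * #𝒜 ≤ ∑ A ∈ 𝒜, #(X ∩ A) + #P * #𝒜 + #{A ∈ 𝒜 | P ⊆ A} :=
  calc (k + 1) * #𝒜 = ∑ A ∈ 𝒜, (#A + 1) := by
        rw [sum_congr rfl fun A hA => by rw [hk A hA], sum_const, smul_eq_mul, mul_comm]
    _ ≤ ∑ A ∈ 𝒜, (#(X ∩ A) + #P + if P ⊆ A then 1 else 0) :=
        sum_le_sum fun A hA => card_add_one_le_card_inter_add_card (hcover A hA)
    _ = ∑ A ∈ 𝒜, #(X ∩ A) + #P * #𝒜 + #{A ∈ 𝒜 | P ⊆ A} := by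
        rw [sum_add_distrib, sum_add_distrib, sum_const, smul_eq_mul, card_filter, mul_comm]

theorem sum_card_filter_pair_subset {𝒜 : Finset (Finset α)} {M : Finset α} {k : ℕ}
    (hM : ∀ A ∈ 𝒜, A ⊆ M) (hk : ∀ A ∈ 𝒜, #A = k) (a : α) :
    ∑ u ∈ M.erase a, #{A ∈ 𝒜 | {a, u} ⊆ A} = (k - 1) * #{A ∈ 𝒜 | a ∈ A} := by
  simp_rw [insert_subset_iff, singleton_subset_iff, ← filter_filter]
  rw [sum_card_filter_mem_eq_sum_card_inter, sum_const_nat fun A hA => ?_, mul_comm]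
  obtain ⟨hA, haA⟩ := mem_filter.1 hA
  rw [erase_inter, inter_eq_right.2 (hM A hA), card_erase_of_mem haA, hk A hA]

theorem union_mem_of_forall_insert_mem {ℱ : Finset (Finset α)}
    (hℱ : ∀ A ∈ ℱ, ∀ B ∈ ℱ, A ∪ B ∈ ℱ) {P V : Finset α} (hV : V.Nonempty)
    (h : ∀ v ∈ V, insert v P ∈ ℱ) : P ∪ V ∈ ℱ := by
  have hsup : V.sup (insert · P) = P ∪ V := by
    obtain ⟨v₀, hv₀⟩ := hV
    ext x
    simp only [mem_sup, mem_insert, mem_union]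
    exact ⟨fun ⟨v, hv, hx⟩ => hx.elim (fun h => Or.inr (h ▸ hv)) Or.inl,
      fun hx => hx.elim (fun h => ⟨v₀, hv₀, Or.inr h⟩) fun h => ⟨x, h, Or.inl rfl⟩⟩
  exact hsup ▸ SupClosed.finsetSup_mem (s := (ℱ : Set (Finset α)))
    (fun A hA B hB => hℱ A hA B hB) hV h

theorem choose_card_le_card_slice {ℱ : Finset (Finset α)}
    (hℱ : ∀ A ∈ ℱ, ∀ B ∈ ℱ, A ∪ B ∈ ℱ) {P U : Finset α} (hPU : Disjoint P U)
    (hU : ∀ u ∈ U, insert u P ∈ ℱ) {r : ℕ} (hr : r ≠ 0) :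
    (#U).choose r ≤ #(ℱ # (#P + r)) := by
  rw [← card_powersetCard]
  refine card_le_card_of_injOn (P ∪ ·) (fun V hV => ?_) (fun V hV W hW hVW => ?_)
  · obtain ⟨hVU, hVr⟩ := mem_powersetCard.1 hV
    refine mem_slice.2 ⟨union_mem_of_forall_insert_mem hℱ ?_ fun v hv => hU v (hVU hv), ?_⟩
    · exact card_pos.1 (hVr ▸ Nat.pos_of_ne_zero hr)
    · rw [card_union_of_disjoint (hPU.mono_right hVU), hVr]
  · rw [← union_sdiff_cancel_left (hPU.mono_right (mem_powersetCard.1 hV).1),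
      ← union_sdiff_cancel_left (hPU.mono_right (mem_powersetCard.1 hW).1)]
    exact congrArg (· \ P) hVW

theorem card_filter_superset_slice_eq {ℱ : Finset (Finset α)} {M P : Finset α} {k : ℕ}
    (hM : ∀ A ∈ ℱ, A ⊆ M) (hk : #P + 1 = k) :
    #{A ∈ ℱ # k | P ⊆ A} = #{v ∈ M \ P | insert v P ∈ ℱ} := by
  symm
  refine card_bij (fun v _ => insert v P) (fun v hv => ?_) (fun v hv v' _ h => ?_) fun A hA => ?_
  · obtain ⟨hv, hvℱ⟩ := mem_filter.1 hv
    rw [mem_filter, mem_slice, card_insert_of_notMem (mem_sdiff.1 hv).2, hk]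
    exact ⟨⟨hvℱ, rfl⟩, subset_insert v P⟩
  · exact (insert_inj (mem_sdiff.1 (mem_filter.1 hv).1).2).1 h
  · obtain ⟨⟨hAℱ, hAk⟩, hPA⟩ := And.imp_left mem_slice.1 (mem_filter.1 hA)
    obtain ⟨v, hvP, rfl⟩ := exists_eq_insert_iff.2 ⟨hPA, hk.trans hAk.symm⟩
    exact ⟨v, mem_filter.2 ⟨mem_sdiff.2 ⟨hM _ hAℱ (mem_insert_self v P), hvP⟩, hAℱ⟩, rfl⟩

/-- The paper's `ℱ = {∅, M₆} ∪ 𝒢₃ ∪ 𝒢₄ ∪ 𝒢₅` with `𝒢₅ ≠ ∅`, where `𝒢ᵢ = ℱ # i`. -/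
structure IsLayered (M : Finset α) (ℱ : Finset (Finset α)) : Prop where
  card_ground : #M = 6
  subset_ground : ∀ A ∈ ℱ, A ⊆ M
  empty_mem : ∅ ∈ ℱ
  ground_mem : M ∈ ℱ
  union_mem : ∀ A ∈ ℱ, ∀ B ∈ ℱ, A ∪ B ∈ ℱ
  three_le_card : ∀ A ∈ ℱ, A ≠ ∅ → 3 ≤ #A
  slice_five_nonempty : (ℱ # 5).Nonempty

namespace IsLayered

variable {M H : Finset α} {ℱ : Finset (Finset α)}

theorem of_union (hM : #M = 6) {𝒢₃ 𝒢₄ 𝒢₅ : Finset (Finset α)} (h𝒢₅ : 𝒢₅.Nonempty)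
    (h3 : ∀ A ∈ 𝒢₃, A ⊆ M ∧ #A = 3) (h4 : ∀ A ∈ 𝒢₄, A ⊆ M ∧ #A = 4)
    (h5 : ∀ A ∈ 𝒢₅, A ⊆ M ∧ #A = 5) (hℱ : ℱ = {∅, M} ∪ 𝒢₃ ∪ 𝒢₄ ∪ 𝒢₅)
    (hUC : ∀ A ∈ ℱ, ∀ B ∈ ℱ, A ∪ B ∈ ℱ) : IsLayered M ℱ := by
  have hmem : ∀ A ∈ ℱ, A = ∅ ∨ (A ⊆ M ∧ 3 ≤ #A) := by
    intro A hA
    simp only [hℱ, mem_union, mem_insert, mem_singleton] at hA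
    rcases hA with (((h | rfl) | h) | h) | h
    · exact .inl h
    · exact .inr ⟨subset_rfl, by omega⟩
    · exact .inr ⟨(h3 A h).1, (h3 A h).2.ge⟩
    · exact .inr ⟨(h4 A h).1, by rw [(h4 A h).2]; omega⟩
    · exact .inr ⟨(h5 A h).1, by rw [(h5 A h).2]; omega⟩
  refine ⟨hM, fun A hA => ?_, by simp [hℱ], by simp [hℱ], hUC,
    fun A hA hA0 => ((hmem A hA).resolve_left hA0).2, ?_⟩
  · rcases hmem A hA with rfl | h
    exacts [empty_subset _, h.1]
  · obtain ⟨A, hA⟩ := h𝒢₅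
    exact ⟨A, mem_slice.2 ⟨by simp [hℱ, hA], (h5 A hA).2⟩⟩

theorem sum_eq (hℱ : IsLayered M ℱ) {β : Type*} [AddCommMonoid β] (f : Finset α → β) :
    ∑ A ∈ ℱ, f A =
      f ∅ + f M + ∑ A ∈ ℱ # 3, f A + ∑ A ∈ ℱ # 4, f A + ∑ A ∈ ℱ # 5, f A := by
  have hcard : ∀ A ∈ ℱ, #A ∈ ({0, 6, 3, 4, 5} : Finset ℕ) := by
    intro A hA
    have := hℱ.card_ground ▸ card_le_card (hℱ.subset_ground A hA)
    by_cases hA0 : A = ∅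
    · simp [hA0]
    · have := hℱ.three_le_card A hA hA0
      simp only [mem_insert, mem_singleton]
      omega
  have h0 : ℱ # 0 = {∅} := by
    ext A
    simp only [mem_slice, card_eq_zero, mem_singleton]
    exact ⟨And.right, fun h => ⟨h ▸ hℱ.empty_mem, h⟩⟩
  have h6 : ℱ # 6 = {M} := by
    ext A
    simp only [mem_slice, mem_singleton]
    refine ⟨fun ⟨hA, hA6⟩ => eq_of_subset_of_card_le (hℱ.subset_ground A hA) ?_,
      fun h => ⟨h ▸ hℱ.ground_mem, h ▸ hℱ.card_ground⟩⟩
    rw [hA6, hℱ.card_ground]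
  rw [← sum_fiberwise_of_maps_to hcard]
  change ∑ k ∈ _, ∑ A ∈ ℱ # k, f A = _
  simp [h0, h6, add_assoc, add_left_comm]

theorem card_eq (hℱ : IsLayered M ℱ) : #ℱ = #(ℱ # 3) + #(ℱ # 4) + #(ℱ # 5) + 2 := by
  simp only [card_eq_sum_ones, hℱ.sum_eq]
  ring

theorem sum_slice_le_of_light (hℱ : IsLayered M ℱ) {X P : Finset α} (hXM : X ⊆ M)
    (hcover : ∀ A ∈ ℱ, A ≠ M → A ⊆ X ∪ P) (hX : ∀ x ∈ X, 2 * #{A ∈ ℱ | x ∈ A} < #ℱ) :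
    2 * (4 * #(ℱ # 3) + 5 * #(ℱ # 4) + 6 * #(ℱ # 5)) + #X ≤
      (#X + 2 * #P) * (#(ℱ # 3) + #(ℱ # 4) + #(ℱ # 5)) +
        2 * (#{A ∈ ℱ # 3 | P ⊆ A} + #{A ∈ ℱ # 4 | P ⊆ A} + #{A ∈ ℱ # 5 | P ⊆ A}) := by
  have hlight := two_mul_sum_card_inter_add_card_le hX
  rw [hℱ.sum_eq, hℱ.card_eq, inter_empty, card_empty, inter_eq_left.2 hXM] at hlight
  have hslice (k : ℕ) (hk : k ≤ 5) :
      (k + 1) * #(ℱ # k) ≤ ∑ A ∈ ℱ # k, #(X ∩ A) + #P * #(ℱ # k) + #{A ∈ ℱ # k | P ⊆ A} := by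
    refine add_one_mul_card_le_sum_card_inter (fun A hA => (mem_slice.1 hA).2) fun A hA => ?_
    obtain ⟨hAℱ, hAk⟩ := mem_slice.1 hA
    exact hcover A hAℱ fun h => by rw [h, hℱ.card_ground] at hAk; omega
  have h3 := hslice 3 (by norm_num)
  have h4 := hslice 4 (by norm_num)
  have h5 := hslice 5 (by norm_num)
  linarith

theorem card_filter_superset_slice_three_le_four (hℱ : IsLayered M ℱ) (hHM : H ⊆ M)
    (hH : #H = 2) : #{A ∈ ℱ # 3 | H ⊆ A} ≤ 4 := by
  rw [card_filter_superset_slice_eq hℱ.subset_ground (by omega)]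
  calc _ ≤ #(M \ H) := card_filter_le _ _
    _ = 4 := by rw [card_sdiff_of_subset hHM, hℱ.card_ground, hH]

theorem choose_card_filter_superset_slice_three_le (hℱ : IsLayered M ℱ) (hH : #H = 2) :
    (#{A ∈ ℱ # 3 | H ⊆ A}).choose 3 ≤ #(ℱ # 5) := by
  rw [card_filter_superset_slice_eq hℱ.subset_ground (by omega)]
  have hdisj : Disjoint H {v ∈ M \ H | insert v H ∈ ℱ} :=
    disjoint_left.2 fun x hxH hx => (mem_sdiff.1 (mem_filter.1 hx).1).2 hxH
  simpa [hH] using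
    choose_card_le_card_slice hℱ.union_mem hdisj (fun v hv => (mem_filter.1 hv).2) three_ne_zero

theorem card_filter_mem_slice_three_lt (hℱ : IsLayered M ℱ) {a : α} (ha : a ∈ M) :
    #{A ∈ ℱ # 3 | a ∈ A} < 3 * #(ℱ # 5) + 5 := by
  have hsum := sum_card_filter_pair_subset (𝒜 := ℱ # 3)
    (fun A hA => hℱ.subset_ground A (slice_subset hA)) (fun A hA => (mem_slice.1 hA).2) a
  have hpair (u : α) (hu : u ∈ M.erase a) : #({a, u} : Finset α) = 2 :=
    card_pair (mem_erase.1 hu).1.symm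
  have hpairM (u : α) (hu : u ∈ M.erase a) : ({a, u} : Finset α) ⊆ M :=
    insert_subset ha (singleton_subset_iff.2 (mem_of_mem_erase hu))
  have hM : #(M.erase a) = 5 := by rw [card_erase_of_mem ha, hℱ.card_ground]
  have hle : ∑ u ∈ M.erase a, #{A ∈ ℱ # 3 | {a, u} ⊆ A} ≤ ∑ _u ∈ M.erase a, 4 :=
    sum_le_sum fun u hu => hℱ.card_filter_superset_slice_three_le_four (hpairM u hu) (hpair u hu)
  rw [hsum, sum_const, hM, smul_eq_mul] at hle
  have hn₅ := hℱ.slice_five_nonempty.card_pos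
  by_contra! hq
  obtain ⟨u, hu, hcu⟩ : ∃ u ∈ M.erase a, 3 < #{A ∈ ℱ # 3 | {a, u} ⊆ A} := by
    refine exists_lt_of_sum_lt ?_
    rw [hsum, sum_const, hM, smul_eq_mul]
    omega
  have hcu4 := hℱ.card_filter_superset_slice_three_le_four (hpairM u hu) (hpair u hu)
  have h5 := hℱ.choose_card_filter_superset_slice_three_le (hpair u hu)
  rw [show #{A ∈ ℱ # 3 | {a, u} ⊆ A} = 4 by omega, show Nat.choose 4 3 = 4 from rfl] at h5
  omega

theorem notMem_of_ne_ground (hℱ : IsLayered M ℱ) {U : Finset α} {w : α}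
    (hM : M = insert w (H ∪ U)) (hwHU : w ∉ H ∪ U) (hH : #H = 2)
    (hU : ∀ u ∈ U, u ∉ H ∧ insert u H ∈ ℱ) (hw : insert w H ∉ ℱ)
    (h5 : ℱ # 5 = {H ∪ U}) (h4 : ∀ A ∈ ℱ # 4, H ⊆ A) :
    ∀ A ∈ ℱ, A ≠ M → w ∉ A := by
  have hno5 (B : Finset α) (hB : B ∈ ℱ) (hwB : w ∈ B) : #B ≠ 5 := fun hB5 => by
    have := h5 ▸ mem_slice.2 ⟨hB, hB5⟩
    exact hwHU (mem_singleton.1 this ▸ hwB)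
  have hno4 (B : Finset α) (hB : B ∈ ℱ) (hwB : w ∈ B) : #B ≠ 4 := fun hB4 => by
    have hHB := h4 B (mem_slice.2 ⟨hB, hB4⟩)
    obtain ⟨u, hu, huB⟩ : ∃ u ∈ U, u ∉ B := by
      by_contra! hUB
      have := card_le_card (hM ▸ insert_subset hwB (union_subset hHB hUB))
      rw [hℱ.card_ground] at this
      omega
    refine hno5 _ (hℱ.union_mem B hB _ (hU u hu).2) (mem_union_left _ hwB) ?_
    rw [union_insert, union_eq_left.2 hHB, card_insert_of_notMem huB, hB4]
  intro A hA hAM hwA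
  have hA6 : #A < 6 :=
    hℱ.card_ground ▸ card_lt_card ((hℱ.subset_ground A hA).ssubset_of_ne hAM)
  have hA3 := hℱ.three_le_card A hA (ne_empty_of_mem hwA)
  obtain hA3 | hA4 | hA5 : #A = 3 ∨ #A = 4 ∨ #A = 5 := by omega
  · obtain ⟨u, hu, huA⟩ : ∃ u ∈ U, u ∈ A := by
      by_contra! hUA
      have hAw : A = insert w H := eq_of_subset_of_card_le (fun x hx => ?_) ?_
      · exact hw (hAw ▸ hA)
      · have hxM := hM ▸ hℱ.subset_ground A hA hx
        simp only [mem_insert, mem_union] at hxM ⊢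
        exact hxM.imp_right (Or.resolve_right · (hUA x · hx))
      · rw [card_insert_of_notMem fun h => hwHU (mem_union_left U h), hH, hA3]
    have hAH : A ∪ H ∈ ℱ := by
      have := hℱ.union_mem A hA _ (hU u hu).2
      rwa [union_insert, insert_eq_of_mem (mem_union_left H huA)] at this
    have huw : u ≠ w := fun h => hwHU (mem_union_right H (h ▸ hu))
    have h4le : 4 ≤ #(A ∪ H) := by
      have hsub : insert u (insert w H) ⊆ A ∪ H := insert_subset (mem_union_left H huA)
        (insert_subset (mem_union_left H hwA) subset_union_right)
      have := card_le_card hsub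
      rwa [card_insert_of_notMem (by simp [huw, (hU u hu).1]),
        card_insert_of_notMem fun h => hwHU (mem_union_left U h), hH] at this
    have := card_union_le A H
    have := hno4 _ hAH (mem_union_left H hwA)
    have := hno5 _ hAH (mem_union_left H hwA)
    omega
  · exact hno4 A hA hwA hA4
  · exact hno5 A hA hwA hA5

theorem card_eq_three_and_slice_five_eq_of_light (hℱ : IsLayered M ℱ) (hHM : H ⊆ M)
    (hH : #H = 2) (hlight : ∀ x ∈ M \ H, 2 * #{A ∈ ℱ | x ∈ A} < #ℱ) :
    #{v ∈ M \ H | insert v H ∈ ℱ} = 3 ∧ ℱ # 5 = {H ∪ {v ∈ M \ H | insert v H ∈ ℱ}} ∧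
      ∀ A ∈ ℱ # 4, H ⊆ A := by
  set U := {v ∈ M \ H | insert v H ∈ ℱ}
  have hq₃ : #{A ∈ ℱ # 3 | H ⊆ A} = #U :=
    card_filter_superset_slice_eq hℱ.subset_ground (by omega)
  have hU4 := hq₃ ▸ hℱ.card_filter_superset_slice_three_le_four hHM hH
  have hU5 := hq₃ ▸ hℱ.choose_card_filter_superset_slice_three_le hH
  have hcount := hℱ.sum_slice_le_of_light sdiff_subset
    (fun A hA _ => sdiff_union_of_subset hHM ▸ hℱ.subset_ground A hA) hlight
  rw [card_sdiff_of_subset hHM, hℱ.card_ground, hH, hq₃] at hcount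
  have hq₄ := card_filter_le (ℱ # 4) fun A => H ⊆ A
  have hq₅ := card_filter_le (ℱ # 5) fun A => H ⊆ A
  have hn₅ := hℱ.slice_five_nonempty.card_pos
  have hU3 : #U = 3 := by
    obtain h | h : #U = 3 ∨ #U = 4 := by omega
    · exact h
    · rw [h, show Nat.choose 4 3 = 4 from rfl] at hU5
      omega
  rw [hU3, Nat.choose_self] at hU5
  rw [hU3] at hcount
  refine ⟨hU3, ?_, (card_filter_eq_iff (p := fun A => H ⊆ A)).1 (by omega)⟩
  have hmem : H ∪ U ∈ ℱ # 5 := by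
    have hHU : Disjoint H U :=
      disjoint_left.2 fun x hxH hx => (mem_sdiff.1 (mem_filter.1 hx).1).2 hxH
    refine mem_slice.2 ⟨union_mem_of_forall_insert_mem hℱ.union_mem ?_
      fun v hv => (mem_filter.1 hv).2, by rw [card_union_of_disjoint hHU, hH, hU3]⟩
    exact card_pos.1 (by omega)
  obtain ⟨B, hB⟩ := card_eq_one.1 (show #(ℱ # 5) = 1 by omega)
  rw [hB] at hmem ⊢
  rw [mem_singleton.1 hmem]

theorem false_of_light_of_card_eq_two (hℱ : IsLayered M ℱ) (hHM : H ⊆ M) (hH : #H = 2)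
    (hlight : ∀ x ∈ M \ H, 2 * #{A ∈ ℱ | x ∈ A} < #ℱ) : False := by
  obtain ⟨hU3, h5, h4⟩ := hℱ.card_eq_three_and_slice_five_eq_of_light hHM hH hlight
  set U := {v ∈ M \ H | insert v H ∈ ℱ}
  have hUM : U ⊆ M \ H := filter_subset _ _
  have hHU : Disjoint H U := disjoint_left.2 fun x hxH hx => (mem_sdiff.1 (hUM hx)).2 hxH
  obtain ⟨w, hw⟩ := card_eq_one.1 (show #((M \ H) \ U) = 1 by
    rw [card_sdiff_of_subset hUM, card_sdiff_of_subset hHM, hℱ.card_ground, hH, hU3])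
  obtain ⟨⟨hwM, hwH⟩, hwU⟩ := And.imp_left mem_sdiff.1 (mem_sdiff.1 (hw ▸ mem_singleton_self w))
  have hM : M = insert w (H ∪ U) := by
    refine (eq_of_subset_of_card_le (insert_subset hwM (union_subset hHM
      (hUM.trans sdiff_subset))) ?_).symm
    rw [hℱ.card_ground, card_insert_of_notMem (by simp [hwH, hwU]), card_union_of_disjoint hHU,
      hH, hU3]
  have hwA := hℱ.notMem_of_ne_ground hM (by simp [hwH, hwU]) hH
    (fun u hu => ⟨(mem_sdiff.1 (hUM hu)).2, (mem_filter.1 hu).2⟩)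
    (fun h => hwU (mem_filter.2 ⟨mem_sdiff.2 ⟨hwM, hwH⟩, h⟩)) h5 h4
  have hcount := hℱ.sum_slice_le_of_light (X := U) (P := H) (hUM.trans sdiff_subset)
    (fun A hA hAM x hx => by
      have := hM ▸ hℱ.subset_ground A hA hx
      rw [mem_insert, union_comm] at this
      exact this.resolve_left fun h => hwA A hA hAM (h ▸ hx))
    fun x hx => hlight x (hUM hx)
  have hq₃ : #{A ∈ ℱ # 3 | H ⊆ A} = 3 :=
    (card_filter_superset_slice_eq hℱ.subset_ground (by omega)).trans hU3
  have hn₃ := hq₃ ▸ card_filter_le (ℱ # 3) fun A => H ⊆ A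
  have hq₅ := card_filter_le (ℱ # 5) fun A => H ⊆ A
  rw [card_eq_one.2 ⟨_, h5⟩] at hq₅
  rw [hU3, hH, hq₃, card_eq_one.2 ⟨_, h5⟩, (card_filter_eq_iff (p := fun A => H ⊆ A)).2 h4]
    at hcount
  omega

theorem exists_heavy_mem_sdiff (hℱ : IsLayered M ℱ) (hHM : H ⊆ M) (hH : #H ≤ 2) :
    ∃ x ∈ M \ H, #ℱ ≤ 2 * #{A ∈ ℱ | x ∈ A} := by
  by_contra! hlight
  have hcount := hℱ.sum_slice_le_of_light sdiff_subset
    (fun A hA _ => sdiff_union_of_subset hHM ▸ hℱ.subset_ground A hA) hlight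
  rw [card_sdiff_of_subset hHM, hℱ.card_ground] at hcount
  have hq₃ := card_filter_le (ℱ # 3) fun A => H ⊆ A
  have hq₄ := card_filter_le (ℱ # 4) fun A => H ⊆ A
  have hq₅ := card_filter_le (ℱ # 5) fun A => H ⊆ A
  interval_cases h : #H
  · omega
  · obtain ⟨a, rfl⟩ := card_eq_one.1 h
    have := hℱ.card_filter_mem_slice_three_lt (hHM (mem_singleton_self a))
    simp only [singleton_subset_iff] at hcount hq₃ hq₄ hq₅
    omega
  · exact hℱ.false_of_light_of_card_eq_two hHM h hlight

theorem three_le_card_filter_heavy (hℱ : IsLayered M ℱ) :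
    3 ≤ #{x ∈ M | #ℱ ≤ 2 * #{A ∈ ℱ | x ∈ A}} := by
  by_contra! h
  obtain ⟨x, hx, hheavy⟩ := hℱ.exists_heavy_mem_sdiff (filter_subset _ _) (Nat.le_of_lt_succ h)
  exact (mem_sdiff.1 hx).2 (mem_filter.2 ⟨(mem_sdiff.1 hx).1, hheavy⟩)

end IsLayered

end

theorem stmt_11_general (𝒢₃ 𝒢₄ 𝒢₅ : Finset (Finset ℕ))
    (h𝒢₅ : 𝒢₅.Nonempty)
    (h3 : ∀ A ∈ 𝒢₃, A ⊆ ({1,2,3,4,5,6} : Finset ℕ) ∧ A.card = 3)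
    (h4 : ∀ A ∈ 𝒢₄, A ⊆ ({1,2,3,4,5,6} : Finset ℕ) ∧ A.card = 4)
    (h5 : ∀ A ∈ 𝒢₅, A ⊆ ({1,2,3,4,5,6} : Finset ℕ) ∧ A.card = 5)
    (ℱ : Finset (Finset ℕ))
    (hℱ : ℱ = ({∅, ({1,2,3,4,5,6} : Finset ℕ)} : Finset (Finset ℕ)) ∪ 𝒢₃ ∪ 𝒢₄ ∪ 𝒢₅)
    (hUC : ∀ A ∈ ℱ, ∀ B ∈ ℱ, A ∪ B ∈ ℱ) :
    ∃ x ∈ ({1,2,3,4,5,6} : Finset ℕ), ∃ y ∈ ({1,2,3,4,5,6} : Finset ℕ),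
      ∃ z ∈ ({1,2,3,4,5,6} : Finset ℕ), x ≠ y ∧ x ≠ z ∧ y ≠ z ∧
        2 * (ℱ.filter (fun A => x ∈ A)).card ≥ ℱ.card ∧
        2 * (ℱ.filter (fun A => y ∈ A)).card ≥ ℱ.card ∧
        2 * (ℱ.filter (fun A => z ∈ A)).card ≥ ℱ.card := by
  have hlayered := IsLayered.of_union (by decide) h𝒢₅ h3 h4 h5 hℱ hUC
  obtain ⟨x, hx, y, hy, z, hz, hxy, hxz, hyz⟩ := two_lt_card.1 hlayered.three_le_card_filter_heavy
  simp only [mem_filter] at hx hy hz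
  exact ⟨x, hx.1, y, hy.1, z, hz.1, hxy, hxz, hyz, hx.2, hy.2, hz.2⟩

theorem stmt_11 (𝒢₃ 𝒢₄ 𝒢₅ : Finset (Finset ℕ))
    (h𝒢₃ : 𝒢₃.Nonempty) (h𝒢₄ : 𝒢₄.Nonempty) (h𝒢₅ : 𝒢₅.Nonempty)
    (h3 : ∀ A ∈ 𝒢₃, A ⊆ ({1,2,3,4,5,6} : Finset ℕ) ∧ A.card = 3)
    (h4 : ∀ A ∈ 𝒢₄, A ⊆ ({1,2,3,4,5,6} : Finset ℕ) ∧ A.card = 4)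
    (h5 : ∀ A ∈ 𝒢₅, A ⊆ ({1,2,3,4,5,6} : Finset ℕ) ∧ A.card = 5)
    (ℱ : Finset (Finset ℕ))
    (hℱ : ℱ = ({∅, ({1,2,3,4,5,6} : Finset ℕ)} : Finset (Finset ℕ)) ∪ 𝒢₃ ∪ 𝒢₄ ∪ 𝒢₅)
    (hUC : ∀ A ∈ ℱ, ∀ B ∈ ℱ, A ∪ B ∈ ℱ) :
    ∃ x ∈ ({1,2,3,4,5,6} : Finset ℕ), ∃ y ∈ ({1,2,3,4,5,6} : Finset ℕ),
      ∃ z ∈ ({1,2,3,4,5,6} : Finset ℕ), x ≠ y ∧ x ≠ z ∧ y ≠ z ∧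
        2 * (ℱ.filter (fun A => x ∈ A)).card ≥ ℱ.card ∧
        2 * (ℱ.filter (fun A => y ∈ A)).card ≥ ℱ.card ∧
        2 * (ℱ.filter (fun A => z ∈ A)).card ≥ ℱ.card :=
  stmt_11_general 𝒢₃ 𝒢₄ 𝒢₅ h𝒢₅ h3 h4 h5 ℱ hℱ hUC
end

section
/- Let M₆ = {1,2,3,4,5,6} and let ℱ be a union-closed family of subsets of M₆ with ∅ ∈ ℱ, ⋃_{A ∈ ℱ} A = M₆, and T(ℱ) = 3, i.e. the smallest cardinality of a nonempty member of ℱ is 3. Then there exist at least 3 distinct elements of M₆ each of which belongs to at least half of the sets in ℱ. -/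
/-!
Suppose four points of `{1, …, 6}` each lie in fewer than half of the sets; call them `H` and the
other two points `W`. A nonempty member has at least three points, so it misses at most three
points of `H`, and exactly three only if it is `{h} ∪ W`; let `K` be the set of such `h`.
Double counting the pairs `x ∈ H \ A` against the rareness of the points of `H` gives
`N₁ + 2 ≤ |K|`, where `N₁` is the number of members missing exactly one point of `H`.
If `K = H`, the unions of three of the sets `{h} ∪ W` already give four such members. Otherwise a
member `A` missing at most two points of `H`, two of them `x, y ∈ K`, would give the two members
`A ∪ {x} ∪ W` and `A ∪ {y} ∪ W`; so apart from `∅` and the `{h} ∪ W`, every member misses at most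
one point of `K`, while `K ∪ W` and `H ∪ W` miss none, and double counting over `K` contradicts
the rareness of the points of `K`.
-/

open Finset

variable {α : Type*} [DecidableEq α]

def IsRare (ℱ : Finset (Finset α)) (x : α) : Prop :=
  2 * #{A ∈ ℱ | x ∈ A} < #ℱ

lemma IsRare.card_lt_two_mul_card_filter_notMem {ℱ : Finset (Finset α)} {x : α}
    (hx : IsRare ℱ x) : #ℱ < 2 * #{A ∈ ℱ | x ∉ A} := by
  have := card_filter_add_card_filter_not (s := ℱ) (fun A => x ∈ A)
  unfold IsRare at hx
  omega

lemma sum_card_filter_notMem_eq_sum_card_sdiff (ℱ : Finset (Finset α)) (S : Finset α) :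
    ∑ x ∈ S, #{A ∈ ℱ | x ∉ A} = ∑ A ∈ ℱ, #(S \ A) := by
  simp only [card_filter, sdiff_eq_filter]
  exact sum_comm

lemma card_mul_le_two_mul_sum_card_sdiff_of_forall_isRare {ℱ : Finset (Finset α)}
    {S : Finset α} (hS : ∀ x ∈ S, IsRare ℱ x) : #S * (#ℱ + 1) ≤ 2 * ∑ A ∈ ℱ, #(S \ A) := by
  rw [← sum_card_filter_notMem_eq_sum_card_sdiff, mul_sum, ← smul_eq_mul, ← sum_const]
  exact sum_le_sum fun x hx => (hS x hx).card_lt_two_mul_card_filter_notMem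

lemma SupClosed.mem_of_forall_subset_of_cover {ℱ : Finset (Finset α)} {U : Finset α}
    (hF : SupClosed (ℱ : Set (Finset α))) (hne : ℱ.Nonempty) (hsub : ∀ A ∈ ℱ, A ⊆ U)
    (hcover : ∀ x ∈ U, ∃ A ∈ ℱ, x ∈ A) : U ∈ ℱ := by
  have hU : ℱ.sup' hne id = U := by
    refine (sup'_le hne id hsub).antisymm fun x hx => ?_
    obtain ⟨A, hA, hxA⟩ := hcover x hx
    exact le_sup' id hA hxA
  exact hU ▸ hF.finsetSup'_mem hne fun A hA => hA

lemma card_sdiff_add_card_le {A H W : Finset α} (hA : A ⊆ H ∪ W) :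
    #(H \ A) + #A ≤ #H + #W := by
  have hAH : #(A \ H) ≤ #W := card_le_card fun x hx => by
    have := hA (mem_sdiff.1 hx).1
    simp_all
  have h1 := card_sdiff_add_card_inter H A
  have h2 := card_inter_add_card_sdiff A H
  rw [inter_comm] at h2
  omega

lemma eq_insert_of_card_sdiff_add_one_eq {A H W : Finset α} (hA : A ⊆ H ∪ W) (hW : #W < #A)
    (hHA : #(H \ A) + 1 = #H) : ∃ h ∈ H, A = insert h W := by
  have hle := card_sdiff_add_card_le hA
  have h1 := card_sdiff_add_card_inter H A
  obtain ⟨h, hh⟩ := card_eq_one.1 (show #(H ∩ A) = 1 by omega)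
  have hAH : A \ H = W := by
    refine eq_of_subset_of_card_le (fun x hx => ?_) ?_
    · have := hA (mem_sdiff.1 hx).1
      simp_all
    · have h2 := card_inter_add_card_sdiff A H
      rw [inter_comm] at h2
      omega
  refine ⟨h, (mem_inter.1 (hh ▸ mem_singleton_self h)).1, ?_⟩
  calc A = A ∩ H ∪ A \ H := (sup_inf_sdiff A H).symm
    _ = insert h W := by rw [inter_comm, hh, hAH, insert_eq]

lemma sdiff_union_eq_sdiff_of_disjoint {H W : Finset α} (hHW : Disjoint H W) (S : Finset α) :
    H \ (S ∪ W) = H \ S := by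
  rw [sdiff_union_distrib, sdiff_eq_self_of_disjoint hHW, inter_eq_left.2 sdiff_subset]

def singletonTracePoints (ℱ : Finset (Finset α)) (H W : Finset α) : Finset α :=
  {h ∈ H | insert h W ∈ ℱ}

def countMissing (ℱ : Finset (Finset α)) (H : Finset α) (j : ℕ) : ℕ :=
  #{A ∈ ℱ | #(H \ A) = j}

section

variable {ℱ : Finset (Finset α)} {H W : Finset α}

local notation "K" => singletonTracePoints ℱ H W

lemma card_le_countMissing_one {Y : Finset α}
    (hY : ∀ y ∈ Y, ∃ A ∈ ℱ, H \ A = {y}) : #Y ≤ countMissing ℱ H 1 := by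
  choose! B hBℱ hBH using hY
  refine card_le_card_of_injOn B (fun y hy => ?_) fun y hy z hz hyz => ?_
  · simp [hBℱ y hy, hBH y hy]
  · simpa [hBH y hy, hBH z hz] using congrArg (H \ ·) hyz

lemma countMissing_two_mul_add_le (hH : #H = 4) (hrare : ∀ x ∈ H, IsRare ℱ x) :
    2 * countMissing ℱ H 0 + countMissing ℱ H 1 + 2 ≤
      countMissing ℱ H 3 + 2 * countMissing ℱ H 4 := by
  have hcount := card_mul_le_two_mul_sum_card_sdiff_of_forall_isRare hrare
  rw [hH] at hcount
  have hpt : ∀ A ∈ ℱ, #(H \ A) + (2 * (if #(H \ A) = 0 then 1 else 0) +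
      (if #(H \ A) = 1 then 1 else 0)) ≤
        2 + ((if #(H \ A) = 3 then 1 else 0) + 2 * (if #(H \ A) = 4 then 1 else 0)) := by
    intro A _
    have : #(H \ A) ≤ 4 := hH ▸ card_le_card sdiff_subset
    interval_cases #(H \ A) <;> simp
  have hsum := sum_le_sum hpt
  simp only [sum_add_distrib, ← mul_sum, sum_boole, sum_const, smul_eq_mul,
    Nat.cast_id] at hsum
  unfold countMissing
  omega

lemma countMissing_le_card_singletonTracePoints (hsub : ∀ A ∈ ℱ, A ⊆ H ∪ W)
    (hmin : ∀ A ∈ ℱ, A ≠ ∅ → #W < #A) {j : ℕ} (hj : j + 1 = #H) :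
    countMissing ℱ H j ≤ #K := by
  refine (card_le_card fun A hA => ?_).trans (card_image_le (f := (insert · W)))
  obtain ⟨hAℱ, hAj⟩ := mem_filter.1 hA
  have hAne : A ≠ ∅ := by rintro rfl; simp at hAj; omega
  obtain ⟨h, hH, rfl⟩ := eq_insert_of_card_sdiff_add_one_eq (hsub A hAℱ) (hmin A hAℱ hAne)
    (hAj ▸ hj)
  exact mem_image_of_mem _ (mem_filter.2 ⟨hH, hAℱ⟩)

lemma countMissing_card_le_one (hsub : ∀ A ∈ ℱ, A ⊆ H ∪ W)
    (hmin : ∀ A ∈ ℱ, A ≠ ∅ → #W < #A) : countMissing ℱ H #H ≤ 1 := by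
  have hempty : ∀ A ∈ ℱ, #(H \ A) = #H → A = ∅ := fun A hA hHA => by
    by_contra hAne
    have := card_sdiff_add_card_le (hsub A hA)
    have := hmin A hA hAne
    omega
  refine card_le_one.2 fun A hA B hB => ?_
  simp only [mem_filter] at hA hB
  rw [hempty A hA.1 hA.2, hempty B hB.1 hB.2]

lemma union_mem_of_subset_singletonTracePoints (hF : SupClosed (ℱ : Set (Finset α)))
    {S : Finset α} (hS : S ⊆ K) (hne : S.Nonempty) : S ∪ W ∈ ℱ := by
  have hsup : S.sup' hne (insert · W) = S ∪ W := by
    ext x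
    simp only [mem_sup', mem_insert, mem_union]
    obtain ⟨y, hy⟩ := hne
    constructor
    · rintro ⟨i, hi, rfl | hx⟩
      exacts [.inl hi, .inr hx]
    · rintro (hx | hx)
      exacts [⟨x, hx, .inl rfl⟩, ⟨y, hy, .inr hx⟩]
  exact hsup ▸ hF.finsetSup'_mem hne fun h hh => (mem_filter.1 (hS hh)).2

lemma countMissing_one_add_two_le (hsub : ∀ A ∈ ℱ, A ⊆ H ∪ W)
    (hmin : ∀ A ∈ ℱ, A ≠ ∅ → #W < #A) (hfull : H ∪ W ∈ ℱ) (hH : #H = 4)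
    (hrare : ∀ x ∈ H, IsRare ℱ x) : countMissing ℱ H 1 + 2 ≤ #K := by
  have hcount := countMissing_two_mul_add_le hH hrare
  have h0 : 0 < countMissing ℱ H 0 := card_pos.2 ⟨H ∪ W, mem_filter.2 ⟨hfull, by simp⟩⟩
  have h3 := countMissing_le_card_singletonTracePoints hsub hmin (j := 3) hH.symm
  have h4 := countMissing_card_le_one hsub hmin
  rw [hH] at h4
  omega

lemma card_le_countMissing_one_of_singletonTracePoints_eq
    (hF : SupClosed (ℱ : Set (Finset α))) (hHW : Disjoint H W) (hK : K = H) (hH : 2 ≤ #H) :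
    #H ≤ countMissing ℱ H 1 := by
  refine card_le_countMissing_one fun y hy => ⟨H.erase y ∪ W, ?_, ?_⟩
  · refine union_mem_of_subset_singletonTracePoints hF ((erase_subset y H).trans hK.ge) ?_
    rw [← card_pos, card_erase_of_mem hy]
    omega
  · rw [sdiff_union_eq_sdiff_of_disjoint hHW, sdiff_erase_self hy]

lemma card_sdiff_singletonTracePoints_le_one (hF : SupClosed (ℱ : Set (Finset α)))
    (hHW : Disjoint H W) (hN1 : countMissing ℱ H 1 ≤ 1) {A : Finset α} (hA : A ∈ ℱ)
    (hg : #(H \ A) ≤ 2) : #(K \ A) ≤ 1 := by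
  by_contra! h
  obtain ⟨x, hx, y, hy, hxy⟩ := one_lt_card.1 h
  have hmem : ∀ u ∈ K \ A, u ∈ H \ A ∧ insert u W ∈ ℱ := fun u hu => by
    simp only [singletonTracePoints, mem_sdiff, mem_filter] at hu ⊢
    exact ⟨⟨hu.1.1, hu.2⟩, hu.1.2⟩
  have hHA : H \ A = {x, y} := by
    refine (eq_of_subset_of_card_le ?_ ?_).symm
    · simp [insert_subset_iff, (hmem x hx).1, (hmem y hy).1]
    · rw [card_pair hxy]; exact hg
  have hunion : ∀ u ∈ K \ A, ∀ v, H \ A = {u, v} → u ≠ v →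
      A ∪ insert u W ∈ ℱ ∧ H \ (A ∪ insert u W) = {v} := fun u hu v huv hne => by
    refine ⟨hF hA (hmem u hu).2, ?_⟩
    rw [union_insert, ← insert_union, sdiff_union_eq_sdiff_of_disjoint hHW, sdiff_insert, huv,
      erase_insert (by simpa using hne)]
  have h2 : #({x, y} : Finset α) ≤ countMissing ℱ H 1 := by
    refine card_le_countMissing_one fun z hz => ?_
    simp only [mem_insert, mem_singleton] at hz
    rcases hz with rfl | rfl
    · exact ⟨_, hunion y hy z (by rw [hHA, pair_comm]) hxy.symm⟩
    · exact ⟨_, hunion x hx z hHA hxy⟩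
  rw [card_pair hxy] at h2
  omega

-- Summed over `ℱ`, with two members `K ∪ W`, `H ∪ W` containing `K`, this gives
-- `2 * ∑ A ∈ ℱ, #(K \ A) ≤ #K * (#ℱ + #K - 3)`.
lemma two_mul_card_sdiff_add_le (hF : SupClosed (ℱ : Set (Finset α)))
    (hsub : ∀ A ∈ ℱ, A ⊆ H ∪ W) (hHW : Disjoint H W) (hmin : ∀ A ∈ ℱ, A ≠ ∅ → #W < #A)
    (hH : #H = 4) (hN1 : countMissing ℱ H 1 ≤ 1) (hK : 2 ≤ #K) {A : Finset α} (hA : A ∈ ℱ) :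
    2 * #(K \ A) + #K * (if K ⊆ A then 1 else 0) ≤
      #K + #K * (if A = ∅ then 1 else 0) + (#K - 2) * (if #(H \ A) = 3 then 1 else 0) := by
  by_cases hKA : K ⊆ A
  · rw [sdiff_eq_empty_iff_subset.2 hKA, if_pos hKA, card_empty]
    omega
  rcases eq_or_ne A ∅ with rfl | hAne
  · rw [if_neg hKA, if_pos rfl, sdiff_empty]
    omega
  have hg : #(H \ A) < 4 := by
    have := card_sdiff_add_card_le (hsub A hA)
    have := hmin A hA hAne
    omega
  by_cases hg3 : #(H \ A) = 3
  · obtain ⟨h, hH, rfl⟩ := eq_insert_of_card_sdiff_add_one_eq (hsub A hA) (hmin A hA hAne)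
      (by omega)
    have hhK : h ∈ K := mem_filter.2 ⟨hH, hA⟩
    have : #(K \ insert h W) ≤ #K - 1 := by
      rw [← card_erase_of_mem hhK, sdiff_insert]
      exact card_le_card (erase_subset_erase h sdiff_subset)
    simp only [hKA, hAne, hg3, if_true, if_false]
    omega
  · have := card_sdiff_singletonTracePoints_le_one hF hHW hN1 hA (by omega)
    simp only [hKA, hAne, hg3, if_false]
    omega

lemma not_forall_isRare_singletonTracePoints (hF : SupClosed (ℱ : Set (Finset α)))
    (hsub : ∀ A ∈ ℱ, A ⊆ H ∪ W) (hHW : Disjoint H W) (hmin : ∀ A ∈ ℱ, A ≠ ∅ → #W < #A)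
    (hfull : H ∪ W ∈ ℱ) (hH : #H = 4) (hN1 : countMissing ℱ H 1 + 2 ≤ #K) (hK : K ≠ H) :
    ¬ ∀ x ∈ K, IsRare ℱ x := by
  intro hrare
  have hKH : K ⊆ H := filter_subset _ _
  have hK3 : #K ≤ 3 := by
    have := card_lt_card (ssubset_of_subset_of_ne hKH hK)
    omega
  have hcount := card_mul_le_two_mul_sum_card_sdiff_of_forall_isRare hrare
  have hsum := sum_le_sum fun A hA =>
    two_mul_card_sdiff_add_le hF hsub hHW hmin hH (by omega) (by omega) hA
  simp only [sum_add_distrib, ← mul_sum, sum_boole, sum_const, smul_eq_mul, Nat.cast_id]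
    at hsum
  have hnil : #{A ∈ ℱ | A = ∅} ≤ 1 :=
    card_le_one.2 fun A hA B hB => (mem_filter.1 hA).2.trans (mem_filter.1 hB).2.symm
  have hsupsets : 2 ≤ #{A ∈ ℱ | K ⊆ A} := by
    have hne : K ∪ W ≠ H ∪ W := fun h => hK <| hKH.antisymm <| by
      simpa [sdiff_union_eq_sdiff_of_disjoint hHW, sdiff_eq_empty_iff_subset] using
        congrArg (H \ ·) h
    have hKW : K ∪ W ∈ ℱ :=
      union_mem_of_subset_singletonTracePoints hF subset_rfl (card_pos.1 (by omega))
    calc 2 = #({K ∪ W, H ∪ W} : Finset (Finset α)) := (card_pair hne).symm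
      _ ≤ #{A ∈ ℱ | K ⊆ A} := card_le_card <| by
        simp only [insert_subset_iff, singleton_subset_iff, mem_filter]
        exact ⟨⟨hKW, subset_union_left⟩, hfull, hKH.trans subset_union_left⟩
  have h3 := countMissing_le_card_singletonTracePoints hsub hmin (j := 3) hH.symm
  unfold countMissing at h3 hN1
  interval_cases #K <;> omega

theorem not_forall_isRare (hF : SupClosed (ℱ : Set (Finset α)))
    (hsub : ∀ A ∈ ℱ, A ⊆ H ∪ W) (hHW : Disjoint H W) (hmin : ∀ A ∈ ℱ, A ≠ ∅ → #W < #A)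
    (hfull : H ∪ W ∈ ℱ) (hH : #H = 4) : ¬ ∀ x ∈ H, IsRare ℱ x := by
  intro hrare
  have hN1 := countMissing_one_add_two_le hsub hmin hfull hH hrare
  by_cases hK : K = H
  · have := card_le_countMissing_one_of_singletonTracePoints_eq hF hHW hK (by omega)
    rw [hK] at hN1
    omega
  · exact not_forall_isRare_singletonTracePoints hF hsub hHW hmin hfull hH hN1 hK
      fun x hx => hrare x (filter_subset _ _ hx)

end

theorem stmt_12_general (ℱ : Finset (Finset ℕ))
    (hsub : ∀ A ∈ ℱ, A ⊆ ({1,2,3,4,5,6} : Finset ℕ))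
    (hUC : ∀ A ∈ ℱ, ∀ B ∈ ℱ, A ∪ B ∈ ℱ)
    (hcover : ∀ x ∈ ({1,2,3,4,5,6} : Finset ℕ), ∃ A ∈ ℱ, x ∈ A)
    (hT3 : (∃ A ∈ ℱ, A.card = 3) ∧ ∀ A ∈ ℱ, A ≠ ∅ → 3 ≤ A.card) :
    ∃ x ∈ ({1,2,3,4,5,6} : Finset ℕ), ∃ y ∈ ({1,2,3,4,5,6} : Finset ℕ),
      ∃ z ∈ ({1,2,3,4,5,6} : Finset ℕ), x ≠ y ∧ x ≠ z ∧ y ≠ z ∧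
        2 * (ℱ.filter (fun A => x ∈ A)).card ≥ ℱ.card ∧
        2 * (ℱ.filter (fun A => y ∈ A)).card ≥ ℱ.card ∧
        2 * (ℱ.filter (fun A => z ∈ A)).card ≥ ℱ.card := by
  classical
  set M : Finset ℕ := {1,2,3,4,5,6}
  have hF : SupClosed (ℱ : Set (Finset ℕ)) := fun A hA B hB => hUC A hA B hB
  obtain ⟨A₁, hA₁, -⟩ := hcover 1 (by simp [M])
  have hM : M ∈ ℱ := hF.mem_of_forall_subset_of_cover ⟨A₁, hA₁⟩ hsub hcover
  by_contra hfew
  have habundant : #{x ∈ M | ¬ IsRare ℱ x} ≤ 2 := by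
    by_contra! h
    obtain ⟨x, hx, y, hy, z, hz, hxy, hxz, hyz⟩ := two_lt_card.1 h
    simp only [mem_filter, IsRare, not_lt] at hx hy hz
    exact hfew ⟨x, hx.1, y, hy.1, z, hz.1, hxy, hxz, hyz, hx.2, hy.2, hz.2⟩
  obtain ⟨H, hHrare, hH⟩ := exists_subset_card_eq (s := {x ∈ M | IsRare ℱ x}) (n := 4) <| by
    have := card_filter_add_card_filter_not (s := M) (fun x => IsRare ℱ x)
    have hM6 : #M = 6 := rfl
    omega
  have hHM : H ⊆ M := hHrare.trans (filter_subset _ _)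
  have hW : #(M \ H) = 2 := by rw [card_sdiff_of_subset hHM, hH]; rfl
  have hHW : H ∪ (M \ H) = M := union_sdiff_of_subset hHM
  refine not_forall_isRare (W := M \ H) hF (by rwa [hHW]) disjoint_sdiff
    (fun A hA hA0 => hW ▸ hT3.2 A hA hA0) (by rwa [hHW]) hH fun x hx => (mem_filter.1 (hHrare hx)).2

theorem stmt_12 (ℱ : Finset (Finset ℕ))
    (hsub : ∀ A ∈ ℱ, A ⊆ ({1,2,3,4,5,6} : Finset ℕ))
    (hUC : ∀ A ∈ ℱ, ∀ B ∈ ℱ, A ∪ B ∈ ℱ)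
    (hempty : ∅ ∈ ℱ)
    (hcover : ∀ x ∈ ({1,2,3,4,5,6} : Finset ℕ), ∃ A ∈ ℱ, x ∈ A)
    (hT3 : (∃ A ∈ ℱ, A.card = 3) ∧ ∀ A ∈ ℱ, A ≠ ∅ → 3 ≤ A.card) :
    ∃ x ∈ ({1,2,3,4,5,6} : Finset ℕ), ∃ y ∈ ({1,2,3,4,5,6} : Finset ℕ),
      ∃ z ∈ ({1,2,3,4,5,6} : Finset ℕ), x ≠ y ∧ x ≠ z ∧ y ≠ z ∧
        2 * (ℱ.filter (fun A => x ∈ A)).card ≥ ℱ.card ∧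
        2 * (ℱ.filter (fun A => y ∈ A)).card ≥ ℱ.card ∧
        2 * (ℱ.filter (fun A => z ∈ A)).card ≥ ℱ.card :=
  stmt_12_general ℱ hsub hUC hcover hT3
end

section
/- Let 𝒢 be a family of 3-element subsets of M₆ = {1,2,3,4,5,6} containing the set {1,2,3}, such that |A ∪ B| = 5 for every two distinct A, B ∈ 𝒢. Then 𝒢 contains at most one set from each of the three families {{1,4,5},{2,4,5},{3,4,5}}, {{1,4,6},{2,4,6},{3,4,6}}, and {{1,5,6},{2,5,6},{3,5,6}}, and every member of 𝒢 other than {1,2,3} lies in the union of these three families. -/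
/-! For 3-sets, `|A ∪ B| = 5` says exactly that `A` and `B` meet in a single point. So every member
of `𝒢` other than `{1,2,3}` is a point of `{1,2,3}` together with a pair from `{4,5,6}`, and two
distinct members sharing the same pair would meet in two points. -/

open Finset

variable {α : Type*} [DecidableEq α]

lemma card_inter_eq_one_of_card_union_eq_five {A B : Finset α} (hA : #A = 3) (hB : #B = 3)
    (h : #(A ∪ B) = 5) : #(A ∩ B) = 1 := by
  have := card_union_add_card_inter A B
  omega

lemma card_inter_le_one_of_forall_subset {𝒢 ℱ : Finset (Finset α)} {P : Finset α}
    (hP : 2 ≤ #P) (hℱ : ∀ A ∈ ℱ, P ⊆ A)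
    (h𝒢 : (𝒢 : Set (Finset α)).Pairwise fun A B => #(A ∩ B) = 1) : #(𝒢 ∩ ℱ) ≤ 1 := by
  refine card_le_one.2 fun A hA B hB => ?_
  rw [mem_inter] at hA hB
  by_contra hne
  have hPAB : #P ≤ #(A ∩ B) := card_le_card (subset_inter (hℱ A hA.2) (hℱ B hB.2))
  have hAB := h𝒢 hA.1 hB.1 hne
  omega

lemma filter_powersetCard_three_card_inter_eq_one :
    {A ∈ ({1,2,3,4,5,6} : Finset ℕ).powersetCard 3 | #(A ∩ {1,2,3}) = 1} =
      {{1,4,5}, {2,4,5}, {3,4,5}, {1,4,6}, {2,4,6}, {3,4,6}, {1,5,6}, {2,5,6}, {3,5,6}} := by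
  decide

theorem stmt_14 (𝒢 : Finset (Finset ℕ))
    (h𝒢 : ∀ A ∈ 𝒢, A ⊆ ({1,2,3,4,5,6} : Finset ℕ) ∧ A.card = 3)
    (hmem : ({1,2,3} : Finset ℕ) ∈ 𝒢)
    (hunion : ∀ A ∈ 𝒢, ∀ B ∈ 𝒢, A ≠ B → (A ∪ B).card = 5) :
    (𝒢 ∩ ({{1,4,5}, {2,4,5}, {3,4,5}} : Finset (Finset ℕ))).card ≤ 1 ∧
    (𝒢 ∩ ({{1,4,6}, {2,4,6}, {3,4,6}} : Finset (Finset ℕ))).card ≤ 1 ∧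
    (𝒢 ∩ ({{1,5,6}, {2,5,6}, {3,5,6}} : Finset (Finset ℕ))).card ≤ 1 ∧
    ∀ A ∈ 𝒢, A ≠ ({1,2,3} : Finset ℕ) →
      A ∈ ({{1,4,5}, {2,4,5}, {3,4,5}, {1,4,6}, {2,4,6}, {3,4,6},
            {1,5,6}, {2,5,6}, {3,5,6}} : Finset (Finset ℕ)) := by
  have hinter : (𝒢 : Set (Finset ℕ)).Pairwise fun A B => #(A ∩ B) = 1 := fun A hA B hB hne =>
    card_inter_eq_one_of_card_union_eq_five (h𝒢 A hA).2 (h𝒢 B hB).2 (hunion A hA B hB hne)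
  refine ⟨card_inter_le_one_of_forall_subset (P := {4,5}) (by decide) (by decide) hinter,
    card_inter_le_one_of_forall_subset (P := {4,6}) (by decide) (by decide) hinter,
    card_inter_le_one_of_forall_subset (P := {5,6}) (by decide) (by decide) hinter,
    fun A hA hne => ?_⟩
  rw [← filter_powersetCard_three_card_inter_eq_one]
  exact mem_filter.2 ⟨mem_powersetCard.2 (h𝒢 A hA), hinter hA hmem hne⟩
end
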